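/- arXiv:cs/0506065 — 12 statements merged into one kernel-verified Lean document; each statement's English description precedes it below -/
import Mathlib

section
/- Let Γ_L = (𝒜₀, 𝒜₁, …, 𝒜_L) be an access structure on share indices {1, …, n} with ∅ ∈ 𝒜₀. Then there exist a finite field F, a nonempty finite randomness set R, finite share-value sets W₁, …, W_n, and a sharing map Φ : F^L × R → W₁ × ⋯ × W_n that is a partially decryptable (PD) ramp secret sharing scheme for Γ_L if and only if Ã_ℓ is monotone for every ℓ ∈ {1, …, L}. -/
/-! Shared definitions: ramp secret sharing schemes with general access structures.

A sharing map `Φ : (Fin L → F) → R → (∀ i : Fin n, W i)` encodes a secret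
`s : Fin L → F` together with a uniform random input `r : R` into `n` shares. -/

section Defs

variable {F : Type*} {L n : ℕ} {R : Type*} {W : Fin n → Type*}

/-- The index set `I ⊆ {1,…,L}` is explicitly decrypted by the share set `A`:
the shares with index in `A` determine the coordinates of the secret in `I`. -/
def ExplicitlyDecrypted (Φ : (Fin L → F) → R → ∀ i, W i) (A : Finset (Fin n))
    (I : Finset (Fin L)) : Prop :=
  ∀ s r s' r', (∀ i ∈ A, Φ s r i = Φ s' r' i) → ∀ j ∈ I, s j = s' j

/-- The index set `J ⊆ {1,…,L}` is perfectly hidden from the share set `A`: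
for every value `w` of the shares in `A`, all assignments of the coordinates of the
secret in `J` are compatible with `w` in equally many ways (the counting equivalent,
for uniform inputs, of `H(S_J | Φ_A) = H(S_J)`). -/
def PerfectlyHidden (Φ : (Fin L → F) → R → ∀ i, W i) (A : Finset (Fin n))
    (J : Finset (Fin L)) : Prop :=
  ∀ (w : ∀ i, W i) (x x' : Fin L → F),
    Nat.card {p : (Fin L → F) × R //
        (∀ i ∈ A, Φ p.1 p.2 i = w i) ∧ ∀ j ∈ J, p.1 j = x j} =
    Nat.card {p : (Fin L → F) × R //
        (∀ i ∈ A, Φ p.1 p.2 i = w i) ∧ ∀ j ∈ J, p.1 j = x' j}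

/-- `𝒜 0, 𝒜 1, …, 𝒜 L` form an access structure: the families are pairwise
disjoint and their union is the full power set of `{1,…,n}`. -/
def IsAccessStructure {L n : ℕ} (𝒜 : Fin (L + 1) → Set (Finset (Fin n))) : Prop :=
  (∀ ℓ ℓ' : Fin (L + 1), ℓ ≠ ℓ' → 𝒜 ℓ ∩ 𝒜 ℓ' = ∅) ∧
    ∀ A : Finset (Fin n), ∃ ℓ, A ∈ 𝒜 ℓ

/-- Membership in `Ã_ℓ = 𝒜_ℓ ∪ 𝒜_{ℓ+1} ∪ ⋯ ∪ 𝒜_L`. -/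
def TildeMem {L n : ℕ} (𝒜 : Fin (L + 1) → Set (Finset (Fin n))) (ℓ : Fin (L + 1))
    (A : Finset (Fin n)) : Prop :=
  ∃ k, ℓ ≤ k ∧ A ∈ 𝒜 k

/-- `Ã_ℓ` is monotone: supersets of members are members. -/
def TildeMonotone {L n : ℕ} (𝒜 : Fin (L + 1) → Set (Finset (Fin n)))
    (ℓ : Fin (L + 1)) : Prop :=
  ∀ A A' : Finset (Fin n), TildeMem 𝒜 ℓ A → A ⊆ A' → TildeMem 𝒜 ℓ A'

/-- `Φ` is a partially decryptable (PD) ramp secret sharing scheme for the access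
structure `𝒜`: every `A ∈ 𝒜 ℓ` explicitly decrypts some index set `I` of size `ℓ`
while the complementary part of the secret stays perfectly hidden. -/
def IsPDRampScheme (Φ : (Fin L → F) → R → ∀ i, W i)
    (𝒜 : Fin (L + 1) → Set (Finset (Fin n))) : Prop :=
  ∀ (ℓ : Fin (L + 1)) (A : Finset (Fin n)), A ∈ 𝒜 ℓ →
    ∃ I : Finset (Fin L), I.card = (ℓ : ℕ) ∧
      ExplicitlyDecrypted Φ A I ∧ PerfectlyHidden Φ A Iᶜ

/-- `Φ` is a strong ramp secret sharing scheme for the access structure `𝒜`: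
every `A ∈ 𝒜 L` decrypts the whole secret, and every `A ∈ 𝒜 ℓ` with `ℓ < L`
(i) perfectly hides every set of `L - ℓ` coordinates of the secret, and
(ii) leaks exactly `(ℓ/L)·H(S)`: every attained share value `w` on `A` is
compatible with exactly `|F|^(L-ℓ)` secrets, each in equally many ways. -/
def IsStrongRampScheme (Φ : (Fin L → F) → R → ∀ i, W i)
    (𝒜 : Fin (L + 1) → Set (Finset (Fin n))) : Prop :=
  (∀ A ∈ 𝒜 (Fin.last L), ∀ s r s' r',
      (∀ i ∈ A, Φ s r i = Φ s' r' i) → s = s') ∧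
  ∀ ℓ : Fin (L + 1), (ℓ : ℕ) < L → ∀ A ∈ 𝒜 ℓ,
    (∀ J : Finset (Fin L), J.card = L - (ℓ : ℕ) → PerfectlyHidden Φ A J) ∧
    ∀ w : ∀ i, W i, (∃ s r, ∀ i ∈ A, Φ s r i = w i) →
      (Nat.card {s : Fin L → F // ∃ r, ∀ i ∈ A, Φ s r i = w i}
          = Nat.card F ^ (L - (ℓ : ℕ))) ∧
      ∀ s s' : Fin L → F, (∃ r, ∀ i ∈ A, Φ s r i = w i) →
        (∃ r, ∀ i ∈ A, Φ s' r i = w i) →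
        Nat.card {r : R // ∀ i ∈ A, Φ s r i = w i}
          = Nat.card {r : R // ∀ i ∈ A, Φ s' r i = w i}

end Defs

section AuxConstruction

variable {L n : ℕ}

/-- For coordinate `j`, the family of share sets that do NOT belong to `Ã_{j+1}`
(the "unqualified" sets for coordinate `j`). -/
noncomputable def Uset (𝒜 : Fin (L + 1) → Set (Finset (Fin n))) (j : Fin L) :
    Finset (Finset (Fin n)) :=
  letI := Classical.dec
  Finset.univ.filter (fun B => ¬ TildeMem 𝒜 j.succ B)

/-- Randomness space for the explicit construction. -/
abbrev Rnd (L n : ℕ) : Type := Fin L → Finset (Fin n) → ZMod 2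

/-- The explicit sharing map: participant `p` receives, for each coordinate `j`,
the public value `s j - ∑_{B ∈ Uset j} r j B` and the random values `r j B` for
every unqualified `B` not containing `p`. -/
noncomputable def myPhi (𝒜 : Fin (L + 1) → Set (Finset (Fin n)))
    (s : Fin L → ZMod 2) (r : Rnd L n) (p : Fin n) :
    (Fin L → ZMod 2) × Rnd L n :=
  (fun j => s j - ∑ B ∈ Uset 𝒜 j, r j B,
   fun j B => if p ∉ B ∧ B ∈ Uset 𝒜 j then r j B else 0)

lemma myPhi_hidden (𝒜 : Fin (L + 1) → Set (Finset (Fin n)))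
    (A : Finset (Fin n)) (J : Finset (Fin L))
    (hA : ∀ j ∈ J, A ∈ Uset 𝒜 j) :
    PerfectlyHidden (myPhi 𝒜) A J := by
  classical
  have key : ∀ (w : ∀ _ : Fin n, (Fin L → ZMod 2) × Rnd L n)
      (x x' : Fin L → ZMod 2) (p : (Fin L → ZMod 2) × Rnd L n),
      ((∀ i ∈ A, myPhi 𝒜 p.1 p.2 i = w i) ∧ ∀ j ∈ J, p.1 j = x j) →
      ((∀ i ∈ A, myPhi 𝒜 (fun j => if j ∈ J then x' j else p.1 j)
          (fun j B => p.2 j B + if j ∈ J ∧ B = A then x' j - x j else 0) i = w i) ∧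
        ∀ j ∈ J, (fun j => if j ∈ J then x' j else p.1 j) j = x' j) := by
    rintro w x x' ⟨s, r⟩ ⟨hw, hx⟩
    constructor
    · intro i hi
      rw [← hw i hi]
      unfold myPhi
      refine Prod.ext ?_ ?_
      · funext j
        dsimp only
        by_cases hj : j ∈ J
        · rw [if_pos hj, Finset.sum_add_distrib]
          have hsum : (∑ B ∈ Uset 𝒜 j, if j ∈ J ∧ B = A then x' j - x j else 0)
              = x' j - x j := by
            simp only [hj, true_and]
            rw [Finset.sum_ite_eq' (Uset 𝒜 j) A (fun _ => x' j - x j),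
              if_pos (hA j hj)]
          have hxj : s j = x j := hx j hj
          rw [hsum, hxj]
          ring
        · simp [hj]
      · funext j B
        dsimp only
        by_cases hc : i ∉ B ∧ B ∈ Uset 𝒜 j
        · rw [if_pos hc, if_pos hc]
          have hne : ¬ (j ∈ J ∧ B = A) := by
            rintro ⟨-, rfl⟩; exact hc.1 hi
          rw [if_neg hne, add_zero]
        · rw [if_neg hc, if_neg hc]
    · intro j hj
      simp [hj]
  intro w x x'
  apply Nat.card_congr
  refine
    { toFun := fun p => ⟨((fun j => if j ∈ J then x' j else p.1.1 j),
        (fun j B => p.1.2 j B + if j ∈ J ∧ B = A then x' j - x j else 0)),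
        key w x x' p.1 p.2⟩
      invFun := fun p => ⟨((fun j => if j ∈ J then x j else p.1.1 j),
        (fun j B => p.1.2 j B + if j ∈ J ∧ B = A then x j - x' j else 0)),
        key w x' x p.1 p.2⟩
      left_inv := ?_
      right_inv := ?_ }
  · rintro ⟨⟨s, r⟩, hp⟩
    apply Subtype.ext
    dsimp only
    refine Prod.ext ?_ ?_
    · funext j
      dsimp only
      by_cases hj : j ∈ J
      · simp only [hj, if_pos]
        exact (hp.2 j hj).symm
      · simp [hj]
    · funext j B
      dsimp only
      by_cases hc : j ∈ J ∧ B = A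
      · rw [if_pos hc, if_pos hc]; ring
      · rw [if_neg hc, if_neg hc]; ring
  · rintro ⟨⟨s, r⟩, hp⟩
    apply Subtype.ext
    dsimp only
    refine Prod.ext ?_ ?_
    · funext j
      dsimp only
      by_cases hj : j ∈ J
      · simp only [hj, if_pos]
        exact (hp.2 j hj).symm
      · simp [hj]
    · funext j B
      dsimp only
      by_cases hc : j ∈ J ∧ B = A
      · rw [if_pos hc, if_pos hc]; ring
      · rw [if_neg hc, if_neg hc]; ring


lemma myPhi_decrypt (𝒜 : Fin (L + 1) → Set (Finset (Fin n)))
    (A : Finset (Fin n)) (hAne : A.Nonempty) (I : Finset (Fin L))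
    (hI : ∀ j ∈ I, ∀ B ∈ Uset 𝒜 j, ∃ p ∈ A, p ∉ B) :
    ExplicitlyDecrypted (myPhi 𝒜) A I := by
  intro s r s' r' hagree j hj
  have hsum : ∑ B ∈ Uset 𝒜 j, r j B = ∑ B ∈ Uset 𝒜 j, r' j B := by
    apply Finset.sum_congr rfl
    intro B hB
    obtain ⟨p, hpA, hpB⟩ := hI j hj B hB
    have h2 := congrFun (congrFun (congrArg Prod.snd (hagree p hpA)) j) B
    simpa [myPhi, hpB, hB] using h2
  obtain ⟨p₀, hp₀⟩ := hAne
  have h1 := congrFun (congrArg Prod.fst (hagree p₀ hp₀)) j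
  simp only [myPhi] at h1
  rw [hsum] at h1
  exact sub_left_inj.mp h1

lemma myPhi_scheme (𝒜 : Fin (L + 1) → Set (Finset (Fin n)))
    (hAS : IsAccessStructure 𝒜) (hempty : (∅ : Finset (Fin n)) ∈ 𝒜 0)
    (hmono : ∀ ℓ : Fin (L + 1), 1 ≤ (ℓ : ℕ) → TildeMonotone 𝒜 ℓ) :
    IsPDRampScheme (myPhi 𝒜) 𝒜 := by
  intro ℓ A hA
  refine ⟨(Finset.range (ℓ : ℕ)).attachFin
      (fun m hm => lt_of_lt_of_le (Finset.mem_range.mp hm) ℓ.is_le), ?_, ?_, ?_⟩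
  · rw [Finset.card_attachFin, Finset.card_range]
  · -- explicit decryption
    rcases Nat.eq_zero_or_pos (ℓ : ℕ) with h0 | hpos
    · intro s r s' r' _ j hj
      rw [Finset.mem_attachFin, h0, Finset.range_zero] at hj
      exact absurd hj (Finset.notMem_empty _)
    · have hℓ0 : ℓ ≠ 0 := by
        intro h; rw [h] at hpos; simp at hpos
      have hAne : A.Nonempty := by
        rw [Finset.nonempty_iff_ne_empty]
        rintro rfl
        have := hAS.1 ℓ 0 hℓ0
        exact absurd (Set.mem_inter hA hempty) (by rw [this]; exact id)
      apply myPhi_decrypt 𝒜 A hAne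
      intro j hj B hB
      rw [Finset.mem_attachFin, Finset.mem_range] at hj
      by_contra hcon
      push_neg at hcon
      have hsub : A ⊆ B := fun p hp => hcon p hp
      have hj1 : (j.succ : Fin (L + 1)) ≤ ℓ := by
        rw [Fin.le_def, Fin.val_succ]
        omega
      have hone : 1 ≤ ((j.succ : Fin (L + 1)) : ℕ) := by
        rw [Fin.val_succ]; omega
      have hTA : TildeMem 𝒜 j.succ A := ⟨ℓ, hj1, hA⟩
      have hTB : TildeMem 𝒜 j.succ B := hmono j.succ hone A B hTA hsub
      simp only [Uset, Finset.mem_filter] at hB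
      exact hB.2 hTB
  · -- perfect hiding
    apply myPhi_hidden
    intro j hj
    rw [Finset.mem_compl, Finset.mem_attachFin, Finset.mem_range] at hj
    push_neg at hj
    simp only [Uset, Finset.mem_filter, Finset.mem_univ, true_and]
    rintro ⟨k, hk, hAk⟩
    have hne : k ≠ ℓ := by
      intro h
      subst h
      rw [Fin.le_def, Fin.val_succ] at hk
      omega
    have := hAS.1 k ℓ hne
    exact absurd (Set.mem_inter hAk hA) (by rw [this]; exact id)

end AuxConstruction

/-- For an access structure `Γ_L = (𝒜₀, …, 𝒜_L)` on share indices
`{1,…,n}` with `∅ ∈ 𝒜₀`, there exist a finite field `F`, a nonempty finite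
randomness set `R`, finite share-value sets `W₁, …, W_n` and a sharing map
`Φ : F^L × R → W₁ × ⋯ × W_n` that is a PD ramp secret sharing scheme for `Γ_L`
if and only if `Ã_ℓ` is monotone for every `ℓ ∈ {1,…,L}`. -/
theorem pd_ramp_scheme_exists_iff_monotone (L n : ℕ) (hL : 0 < L) (hn : 0 < n)
    (𝒜 : Fin (L + 1) → Set (Finset (Fin n))) (hAS : IsAccessStructure 𝒜)
    (hempty : (∅ : Finset (Fin n)) ∈ 𝒜 0) :
    (∃ (F : Type) (_ : Field F) (_ : Fintype F) (R : Type) (_ : Fintype R)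
        (_ : Nonempty R) (W : Fin n → Type) (_ : ∀ i, Fintype (W i))
        (Φ : (Fin L → F) → R → ∀ i, W i), IsPDRampScheme Φ 𝒜) ↔
      ∀ ℓ : Fin (L + 1), 1 ≤ (ℓ : ℕ) → TildeMonotone 𝒜 ℓ := by
  constructor
  · rintro ⟨F, _, _, R, _, _, W, _, Φ, hΦ⟩ ℓ hℓ1 A A' hTA hsub
    obtain ⟨k, hk, hAk⟩ := hTA
    obtain ⟨ℓ', hA'⟩ := hAS.2 A'
    rcases le_or_gt ℓ ℓ' with hle | hlt
    · exact ⟨ℓ', hle, hA'⟩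
    · exfalso
      obtain ⟨I, hIcard, hIdec, -⟩ := hΦ k A hAk
      obtain ⟨I', hI'card, hI'dec, hI'hid⟩ := hΦ ℓ' A' hA'
      have hcard : I'.card < I.card := by
        rw [hIcard, hI'card]
        have h1 : (ℓ' : ℕ) < (ℓ : ℕ) := hlt
        have h2 : (ℓ : ℕ) ≤ (k : ℕ) := hk
        omega
      obtain ⟨j, hjI, hjI'⟩ := Finset.not_subset.mp
        (fun hss => absurd (Finset.card_le_card hss) (not_le.mpr hcard))
      obtain ⟨r₀⟩ := ‹Nonempty R›
      set s₀ : Fin L → F := fun _ => 0 with hs₀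
      set w : ∀ i, W i := fun i => Φ s₀ r₀ i with hw
      have hhid := hI'hid w s₀ (fun _ => 1)
      have hne0 : Nat.card {p : (Fin L → F) × R //
          (∀ i ∈ A', Φ p.1 p.2 i = w i) ∧ ∀ j' ∈ I'ᶜ, p.1 j' = s₀ j'} ≠ 0 := by
        have : Nonempty {p : (Fin L → F) × R //
            (∀ i ∈ A', Φ p.1 p.2 i = w i) ∧ ∀ j' ∈ I'ᶜ, p.1 j' = s₀ j'} :=
          ⟨⟨(s₀, r₀), fun i _ => rfl, fun _ _ => rfl⟩⟩
        exact Nat.card_ne_zero.mpr ⟨this, inferInstance⟩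
      rw [hhid] at hne0
      obtain ⟨⟨p, hp1, hp2⟩⟩ := (Nat.card_ne_zero.mp hne0).1
      have hagree : ∀ i ∈ A, Φ p.1 p.2 i = Φ s₀ r₀ i :=
        fun i hi => hp1 i (hsub hi)
      have hdec := hIdec p.1 p.2 s₀ r₀ hagree j hjI
      have hone : p.1 j = 1 := hp2 j (Finset.mem_compl.mpr hjI')
      rw [hone, hs₀] at hdec
      exact one_ne_zero hdec
  · intro hmono
    exact ⟨ZMod 2, inferInstance, inferInstance, Rnd L n, inferInstance,
      inferInstance, fun _ => (Fin L → ZMod 2) × Rnd L n, fun _ => inferInstance,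
      myPhi 𝒜, myPhi_scheme 𝒜 hAS hempty hmono⟩
end

section
/- Let Φ be a partially decryptable (PD) ramp secret sharing scheme for an access structure Γ_L over a finite field F, with a chosen family of explicitly decrypted index sets I(A) (|I(A)| = ℓ for A ∈ 𝒜_ℓ), and let T be an invertible L × L matrix over F. Define the transformed sharing map Ψ by Ψ(s', r) = Φ(s'·T, r), where s' ∈ F^L is regarded as a row vector. Then Ψ is a strong ramp secret sharing scheme for Γ_L if and only if for every ℓ ∈ {0, …, L−1}, every A ∈ 𝒜_ℓ, and every subset {j₁, …, j_{L−ℓ}} ⊆ {1, …, L} of size L − ℓ, the submatrix of T⁻¹ consisting of the rows with indices in {1, …, L} ∖ I(A) and the columns j₁, …, j_{L−ℓ} has rank L − ℓ. -/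
set_option linter.unusedSectionVars false

section Aux
open Matrix

variable {F : Type*} [Field F] [Fintype F] {L n : ℕ} {R : Type*} [Fintype R]
  {W : Fin n → Type*} [∀ i, Fintype (W i)]

/-- Restriction/extension equivalence. -/
def restrictEquiv (I : Finset (Fin L)) (a : Fin L → F) :
    {s : Fin L → F // ∀ i ∈ I, s i = a i} ≃ ({i : Fin L // i ∈ Iᶜ} → F) where
  toFun s i := s.1 i.1
  invFun y := ⟨fun i => if h : i ∈ I then a i else y ⟨i, Finset.mem_compl.2 h⟩,
    fun i hi => dif_pos hi⟩
  left_inv s := by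
    ext i
    by_cases h : i ∈ I
    · simp [h, s.2 i h]
    · simp [h]
  right_inv y := by
    funext i
    have h : ¬ (i : Fin L) ∈ I := Finset.mem_compl.1 i.2
    simp [h]

/-- Multiplication by an invertible matrix as an equivalence. -/
noncomputable def mulTEquiv {L : ℕ} (T : Matrix (Fin L) (Fin L) F) (hT : IsUnit T.det) :
    (Fin L → F) ≃ (Fin L → F) where
  toFun s := Matrix.vecMul s T
  invFun s := Matrix.vecMul s T⁻¹
  left_inv s := by
    show Matrix.vecMul (Matrix.vecMul s T) T⁻¹ = s
    rw [Matrix.vecMul_vecMul, Matrix.mul_nonsing_inv _ hT, Matrix.vecMul_one]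
  right_inv s := by
    show Matrix.vecMul (Matrix.vecMul s T⁻¹) T = s
    rw [Matrix.vecMul_vecMul, Matrix.nonsing_inv_mul _ hT, Matrix.vecMul_one]

lemma surjective_vecMul_iff_rank {ι κ : Type*} [Fintype ι] [Fintype κ]
    (M : Matrix ι κ F) :
    Function.Surjective (fun y : ι → F => Matrix.vecMul y M) ↔ M.rank = Fintype.card κ := by
  have hfun : (fun y : ι → F => Matrix.vecMul y M) = Mᵀ.mulVecLin := by
    funext y
    rw [Matrix.mulVecLin_apply, Matrix.mulVec_transpose]
  rw [hfun, ← LinearMap.range_eq_top, ← Matrix.rank_transpose M]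
  unfold Matrix.rank
  constructor
  · intro h
    rw [h, finrank_top, Module.finrank_fintype_fun_eq_card]
  · intro h
    exact Submodule.eq_top_of_finrank_eq
      (by rw [h, Module.finrank_fintype_fun_eq_card])

lemma fiber_card_of_rank {ι κ : Type*} [Fintype ι] [Fintype κ]
    (M : Matrix ι κ F) (hcard : Fintype.card ι = Fintype.card κ)
    (hrank : M.rank = Fintype.card κ) (b : κ → F) :
    Nat.card {y : ι → F // Matrix.vecMul y M = b} = 1 := by
  classical
  have hsurj := (surjective_vecMul_iff_rank M).2 hrank
  have hbij : Function.Bijective (fun y : ι → F => Matrix.vecMul y M) := by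
    rw [Fintype.bijective_iff_surjective_and_card]
    exact ⟨hsurj, by simp [Fintype.card_fun, hcard]⟩
  rw [Nat.card_eq_one_iff_unique]
  refine ⟨⟨fun y y' => Subtype.ext (hbij.1 (y.2.trans y'.2.symm))⟩, ?_⟩
  obtain ⟨y, hy⟩ := hsurj b
  exact ⟨⟨y, hy⟩⟩

lemma rank_of_fiber_const {ι κ : Type*} [Fintype ι] [Fintype κ]
    (M : Matrix ι κ F)
    (h : ∀ b b' : κ → F, Nat.card {y : ι → F // Matrix.vecMul y M = b}
      = Nat.card {y : ι → F // Matrix.vecMul y M = b'}) :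
    M.rank = Fintype.card κ := by
  rw [← surjective_vecMul_iff_rank]
  intro b
  rcases isEmpty_or_nonempty {y : ι → F // Matrix.vecMul y M = b} with he | hne
  · have h0 : 0 < Nat.card {y : ι → F // Matrix.vecMul y M = Matrix.vecMul 0 M} :=
      @Nat.card_pos _ ⟨⟨0, rfl⟩⟩ _
    rw [← h b _, Nat.card_of_isEmpty] at h0
    exact absurd h0 (lt_irrefl 0)
  · obtain ⟨⟨y, hy⟩⟩ := hne
    exact ⟨y, hy⟩

lemma rcard_of_agree {Φ : (Fin L → F) → R → ∀ i, W i} {A : Finset (Fin n)}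
    {I : Finset (Fin L)}
    (hED : ExplicitlyDecrypted Φ A I) (hPH : PerfectlyHidden Φ A Iᶜ)
    {w : ∀ i, W i} {s0 : Fin L → F} {r0 : R} (hw : ∀ i ∈ A, Φ s0 r0 i = w i)
    {s : Fin L → F} (hs : ∀ i ∈ I, s i = s0 i) :
    Nat.card {r : R // ∀ i ∈ A, Φ s r i = w i}
      = Nat.card {r : R // ∀ i ∈ A, Φ s0 r i = w i} := by
  have key : ∀ t : Fin L → F, (∀ i ∈ I, t i = s0 i) →
      Nat.card {p : (Fin L → F) × R //
          (∀ i ∈ A, Φ p.1 p.2 i = w i) ∧ ∀ j ∈ Iᶜ, p.1 j = t j}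
        = Nat.card {r : R // ∀ i ∈ A, Φ t r i = w i} := by
    intro t ht
    have hiff : ∀ p : (Fin L → F) × R,
        ((∀ i ∈ A, Φ p.1 p.2 i = w i) ∧ ∀ j ∈ Iᶜ, p.1 j = t j)
          ↔ (p.1 = t ∧ ∀ i ∈ A, Φ t p.2 i = w i) := by
      intro p
      constructor
      · rintro ⟨h1, h2⟩
        have hpt : p.1 = t := by
          funext j
          by_cases hj : j ∈ I
          · exact (hED p.1 p.2 s0 r0
              (fun i hi => (h1 i hi).trans (hw i hi).symm) j hj).trans (ht j hj).symm
          · exact h2 j (Finset.mem_compl.2 hj)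
        refine ⟨hpt, fun i hi => ?_⟩
        rw [← hpt]
        exact h1 i hi
      · rintro ⟨h1, h2⟩
        refine ⟨fun i hi => ?_, fun j _ => by rw [h1]⟩
        rw [h1]
        exact h2 i hi
    refine Nat.card_congr ((Equiv.subtypeEquivRight hiff).trans
      ⟨fun p => ⟨p.1.2, p.2.2⟩, fun r => ⟨(t, r.1), rfl, r.2⟩, fun p => ?_, fun r => rfl⟩)
    exact Subtype.ext (Prod.ext p.2.1.symm rfl)
  rw [← key s hs, ← key s0 (fun _ _ => rfl)]
  exact hPH w s s0

lemma rcard_of_disagree {Φ : (Fin L → F) → R → ∀ i, W i} {A : Finset (Fin n)}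
    {I : Finset (Fin L)}
    (hED : ExplicitlyDecrypted Φ A I)
    {w : ∀ i, W i} {s0 : Fin L → F} {r0 : R} (hw : ∀ i ∈ A, Φ s0 r0 i = w i)
    {s : Fin L → F} (hs : ¬ ∀ i ∈ I, s i = s0 i) :
    Nat.card {r : R // ∀ i ∈ A, Φ s r i = w i} = 0 := by
  have : IsEmpty {r : R // ∀ i ∈ A, Φ s r i = w i} :=
    ⟨fun r => hs fun i hi =>
      hED s r.1 s0 r0 (fun i' hi' => (r.2 i' hi').trans (hw i' hi').symm) i hi⟩
  exact Nat.card_of_isEmpty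

end Aux

section Aux2
open Matrix

variable {F : Type*} [Field F] [Fintype F] {L n : ℕ} {R : Type*} [Fintype R]
  {W : Fin n → Type*} [∀ i, Fintype (W i)]

lemma count_formula {Φ : (Fin L → F) → R → ∀ i, W i} {A : Finset (Fin n)}
    {I : Finset (Fin L)} (T : Matrix (Fin L) (Fin L) F)
    (hED : ExplicitlyDecrypted Φ A I) (hPH : PerfectlyHidden Φ A Iᶜ)
    {w : ∀ i, W i} {s0 : Fin L → F} {r0 : R} (hw : ∀ i ∈ A, Φ s0 r0 i = w i)
    (J : Finset (Fin L)) (x : Fin L → F) :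
    Nat.card {p : (Fin L → F) × R //
        (∀ i ∈ A, Φ (Matrix.vecMul p.1 T) p.2 i = w i) ∧ ∀ j ∈ J, p.1 j = x j}
      = Nat.card {r : R // ∀ i ∈ A, Φ s0 r i = w i}
        * Nat.card {s' : Fin L → F //
            (∀ j ∈ J, s' j = x j) ∧ ∀ i ∈ I, Matrix.vecMul s' T i = s0 i} := by
  classical
  refine Eq.trans (Nat.card_congr (Equiv.subtypeProdEquivSigmaSubtype
    (fun (s' : Fin L → F) (r : R) =>
      (∀ i ∈ A, Φ (Matrix.vecMul s' T) r i = w i) ∧ ∀ j ∈ J, s' j = x j))) ?_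
  rw [Nat.card_eq_fintype_card, Fintype.card_sigma]
  have hterm : ∀ s' : Fin L → F,
      Fintype.card {r : R //
          (∀ i ∈ A, Φ (Matrix.vecMul s' T) r i = w i) ∧ ∀ j ∈ J, s' j = x j}
        = if (∀ j ∈ J, s' j = x j) ∧ ∀ i ∈ I, Matrix.vecMul s' T i = s0 i
          then Nat.card {r : R // ∀ i ∈ A, Φ s0 r i = w i} else 0 := by
    intro s'
    rw [← Nat.card_eq_fintype_card]
    by_cases hJ : ∀ j ∈ J, s' j = x j
    · have e : {r : R // (∀ i ∈ A, Φ (Matrix.vecMul s' T) r i = w i) ∧ ∀ j ∈ J, s' j = x j}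
          ≃ {r : R // ∀ i ∈ A, Φ (Matrix.vecMul s' T) r i = w i} :=
        Equiv.subtypeEquivRight fun r => and_iff_left hJ
      rw [Nat.card_congr e]
      by_cases hI : ∀ i ∈ I, Matrix.vecMul s' T i = s0 i
      · rw [if_pos ⟨hJ, hI⟩]
        exact rcard_of_agree hED hPH hw hI
      · rw [if_neg (by tauto)]
        exact rcard_of_disagree hED hw hI
    · rw [if_neg (by tauto)]
      have : IsEmpty {r : R //
          (∀ i ∈ A, Φ (Matrix.vecMul s' T) r i = w i) ∧ ∀ j ∈ J, s' j = x j} :=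
        ⟨fun r => hJ r.2.2⟩
      exact Nat.card_of_isEmpty
  simp only [hterm]
  rw [← Finset.sum_filter, Finset.sum_const, smul_eq_mul, mul_comm]
  congr 1
  rw [Nat.card_eq_fintype_card, Fintype.card_subtype]

lemma secret_count {L : ℕ} (T : Matrix (Fin L) (Fin L) F) (hT : IsUnit T.det)
    (I J : Finset (Fin L)) (a x : Fin L → F) :
    Nat.card {s' : Fin L → F //
        (∀ j ∈ J, s' j = x j) ∧ ∀ i ∈ I, Matrix.vecMul s' T i = a i}
      = Nat.card {y : {i : Fin L // i ∈ Iᶜ} → F //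
          Matrix.vecMul y ((T⁻¹).submatrix
              (fun i : {v : Fin L // v ∈ Iᶜ} => (i : Fin L))
              (fun j : {v : Fin L // v ∈ J} => (j : Fin L)))
            = fun j : {v : Fin L // v ∈ J} =>
                x j.1 - ∑ i ∈ I, a i * T⁻¹ i j.1} := by
  classical
  apply Nat.card_congr
  refine Equiv.trans (Equiv.subtypeEquiv
    (p := fun s' => (∀ j ∈ J, s' j = x j) ∧ ∀ i ∈ I, Matrix.vecMul s' T i = a i)
    (q := fun s => (∀ i ∈ I, s i = a i) ∧ ∀ j ∈ J, Matrix.vecMul s T⁻¹ j = x j)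
    (mulTEquiv T hT) ?_) ?_
  · intro s'
    show ((∀ j ∈ J, s' j = x j) ∧ ∀ i ∈ I, Matrix.vecMul s' T i = a i)
        ↔ ((∀ i ∈ I, Matrix.vecMul s' T i = a i) ∧
            ∀ j ∈ J, Matrix.vecMul (Matrix.vecMul s' T) T⁻¹ j = x j)
    have hinv : Matrix.vecMul (Matrix.vecMul s' T) T⁻¹ = s' :=
      (mulTEquiv T hT).left_inv s'
    constructor
    · rintro ⟨h1, h2⟩
      exact ⟨h2, fun j hj => by rw [hinv]; exact h1 j hj⟩
    · rintro ⟨h1, h2⟩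
      refine ⟨fun j hj => ?_, h1⟩
      rw [← hinv]
      exact h2 j hj
  refine (Equiv.subtypeSubtypeEquivSubtypeInter
    (fun s : Fin L → F => ∀ i ∈ I, s i = a i)
    (fun s : Fin L → F => ∀ j ∈ J, Matrix.vecMul s T⁻¹ j = x j)).symm.trans ?_
  refine Equiv.subtypeEquiv (restrictEquiv I a) ?_
  intro t
  rw [funext_iff]
  simp only [Subtype.forall]
  apply forall₂_congr
  intro j hj
  have hsub : Matrix.vecMul (restrictEquiv I a t) ((T⁻¹).submatrix
      (fun i : {v : Fin L // v ∈ Iᶜ} => (i : Fin L))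
      (fun j : {v : Fin L // v ∈ J} => (j : Fin L))) ⟨j, hj⟩
      = ∑ i ∈ Iᶜ, t.1 i * T⁻¹ i j := by
    simp only [Matrix.vecMul, dotProduct, Matrix.submatrix_apply, restrictEquiv,
      Equiv.coe_fn_mk]
    exact Finset.sum_coe_sort Iᶜ (fun i => t.1 i * T⁻¹ i j)
  have hsum : Matrix.vecMul t.1 T⁻¹ j
      = (∑ i ∈ I, a i * T⁻¹ i j) + ∑ i ∈ Iᶜ, t.1 i * T⁻¹ i j := by
    have : Matrix.vecMul t.1 T⁻¹ j = ∑ i, t.1 i * T⁻¹ i j := by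
      simp [Matrix.vecMul, dotProduct]
    rw [this, ← Finset.sum_add_sum_compl I (fun i => t.1 i * T⁻¹ i j)]
    congr 1
    exact Finset.sum_congr rfl fun i hi => by rw [t.2 i hi]
  rw [hsub, hsum, eq_sub_iff_add_eq,
    add_comm (∑ i ∈ Iᶜ, t.1 i * T⁻¹ i j) (∑ i ∈ I, a i * T⁻¹ i j)]

lemma compat_count {L : ℕ} (T : Matrix (Fin L) (Fin L) F) (hT : IsUnit T.det)
    (I : Finset (Fin L)) (a : Fin L → F) :
    Nat.card {s' : Fin L → F // ∀ i ∈ I, Matrix.vecMul s' T i = a i}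
      = Nat.card F ^ Iᶜ.card := by
  classical
  rw [Nat.card_congr ((Equiv.subtypeEquiv
    (p := fun s' => ∀ i ∈ I, Matrix.vecMul s' T i = a i)
    (q := fun s => ∀ i ∈ I, s i = a i)
    (mulTEquiv T hT) (fun s' => Iff.rfl)).trans (restrictEquiv I a))]
  rw [Nat.card_fun, Nat.card_eq_fintype_card (α := {i : Fin L // i ∈ Iᶜ}),
    Fintype.card_coe]

end Aux2

/-- Let `Φ` be a PD ramp secret sharing scheme for `Γ_L` with a
chosen family `I(A)` of explicitly decrypted index sets, and let `T` be an
invertible `L × L` matrix over `F`.  The transformed sharing map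
`Ψ (s', r) = Φ (s'·T, r)` is a strong ramp secret sharing scheme for `Γ_L` if
and only if, for every `ℓ < L`, every `A ∈ 𝒜 ℓ` and every size-`(L-ℓ)` column
set `J`, the submatrix of `T⁻¹` with rows in `{1,…,L} \ I(A)` and columns in `J`
has rank `L - ℓ`. -/
theorem transformed_pd_isStrong_iff_rank (F : Type*) [Field F] [Fintype F]
    (L n : ℕ) (hL : 0 < L) (R : Type*) [Fintype R] [Nonempty R]
    (W : Fin n → Type*) [∀ i, Fintype (W i)]
    (𝒜 : Fin (L + 1) → Set (Finset (Fin n))) (hAS : IsAccessStructure 𝒜)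
    (Φ : (Fin L → F) → R → ∀ i, W i) (I : Finset (Fin n) → Finset (Fin L))
    (hPD : ∀ (ℓ : Fin (L + 1)) (A : Finset (Fin n)), A ∈ 𝒜 ℓ →
      (I A).card = (ℓ : ℕ) ∧ ExplicitlyDecrypted Φ A (I A) ∧
        PerfectlyHidden Φ A (I A)ᶜ)
    (T : Matrix (Fin L) (Fin L) F) (hT : IsUnit T.det) :
    IsStrongRampScheme (fun (s' : Fin L → F) (r : R) => Φ (Matrix.vecMul s' T) r) 𝒜 ↔
      ∀ ℓ : Fin (L + 1), (ℓ : ℕ) < L → ∀ A ∈ 𝒜 ℓ,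
        ∀ J : Finset (Fin L), J.card = L - (ℓ : ℕ) →
          Matrix.rank ((T⁻¹).submatrix
              (fun i : {x : Fin L // x ∈ (I A)ᶜ} => (i : Fin L))
              (fun j : {x : Fin L // x ∈ J} => (j : Fin L)))
            = L - (ℓ : ℕ) := by
  classical
  constructor
  · rintro ⟨-, hstrong⟩ ℓ hℓ A hA J hJ
    obtain ⟨hcard, hED, hPH⟩ := hPD ℓ A hA
    obtain ⟨r0⟩ := (inferInstance : Nonempty R)
    set s0 : Fin L → F := Matrix.vecMul 0 T with hs0
    set w : ∀ i, W i := Φ s0 r0 with hwdef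
    have hw0 : ∀ i ∈ A, Φ s0 r0 i = w i := fun _ _ => rfl
    have hhid := (hstrong ℓ hℓ A hA).1 J hJ
    have hJc : Fintype.card {v : Fin L // v ∈ J} = L - (ℓ : ℕ) := by
      rw [Fintype.card_coe, hJ]
    have hN0 : 0 < Nat.card {r : R // ∀ i ∈ A, Φ s0 r i = w i} :=
      @Nat.card_pos _ ⟨⟨r0, hw0⟩⟩ _
    rw [← hJc]
    apply rank_of_fiber_const
    have key : ∀ b : {v : Fin L // v ∈ J} → F,
        Nat.card {p : (Fin L → F) × R //
            (∀ i ∈ A, Φ (Matrix.vecMul p.1 T) p.2 i = w i)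
              ∧ ∀ j ∈ J, p.1 j =
                (if h : j ∈ J then b ⟨j, h⟩ + ∑ i ∈ I A, s0 i * T⁻¹ i j else 0)}
          = Nat.card {r : R // ∀ i ∈ A, Φ s0 r i = w i}
            * Nat.card {y : {v : Fin L // v ∈ (I A)ᶜ} → F //
                Matrix.vecMul y ((T⁻¹).submatrix
                    (fun i : {v : Fin L // v ∈ (I A)ᶜ} => (i : Fin L))
                    (fun j : {v : Fin L // v ∈ J} => (j : Fin L))) = b} := by
      intro b
      rw [count_formula T hED hPH hw0 J
          (fun j => if h : j ∈ J then b ⟨j, h⟩ + ∑ i ∈ I A, s0 i * T⁻¹ i j else 0),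
        secret_count T hT (I A) J s0
          (fun j => if h : j ∈ J then b ⟨j, h⟩ + ∑ i ∈ I A, s0 i * T⁻¹ i j else 0)]
      have hbx : (fun j : {v : Fin L // v ∈ J} =>
          (if h : (j : Fin L) ∈ J then b ⟨j, h⟩ + ∑ i ∈ I A, s0 i * T⁻¹ i (j : Fin L)
            else 0) - ∑ i ∈ I A, s0 i * T⁻¹ i (j : Fin L)) = b := by
        funext j
        obtain ⟨j, hj⟩ := j
        simp [hj]
      rw [hbx]
    intro b b'
    have h2' : Nat.card {p : (Fin L → F) × R //
          (∀ i ∈ A, Φ (Matrix.vecMul p.1 T) p.2 i = w i)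
            ∧ ∀ j ∈ J, p.1 j =
              (if h : j ∈ J then b ⟨j, h⟩ + ∑ i ∈ I A, s0 i * T⁻¹ i j else 0)}
        = Nat.card {p : (Fin L → F) × R //
          (∀ i ∈ A, Φ (Matrix.vecMul p.1 T) p.2 i = w i)
            ∧ ∀ j ∈ J, p.1 j =
              (if h : j ∈ J then b' ⟨j, h⟩ + ∑ i ∈ I A, s0 i * T⁻¹ i j else 0)} :=
      hhid w (fun j => if h : j ∈ J then b ⟨j, h⟩ + ∑ i ∈ I A, s0 i * T⁻¹ i j else 0)
        (fun j => if h : j ∈ J then b' ⟨j, h⟩ + ∑ i ∈ I A, s0 i * T⁻¹ i j else 0)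
    rw [key b, key b'] at h2'
    exact Nat.eq_of_mul_eq_mul_left hN0 h2'
  · intro hrank
    refine ⟨?_, ?_⟩
    · intro A hA s r s' r' hshare
      obtain ⟨hcard, hED, -⟩ := hPD (Fin.last L) A hA
      have hIA : I A = Finset.univ := by
        rw [← Finset.card_eq_iff_eq_univ]
        simpa using hcard
      have h := hED (Matrix.vecMul s T) r (Matrix.vecMul s' T) r' hshare
      have heq : Matrix.vecMul s T = Matrix.vecMul s' T :=
        funext fun j => h j (by simp [hIA])
      have h3 := congrArg (fun v => Matrix.vecMul v T⁻¹) heq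
      simpa [Matrix.vecMul_vecMul, Matrix.mul_nonsing_inv _ hT, Matrix.vecMul_one]
        using h3
    · intro ℓ hℓ A hA
      obtain ⟨hcard, hED, hPH⟩ := hPD ℓ A hA
      have hIc : Fintype.card {v : Fin L // v ∈ (I A)ᶜ} = L - (ℓ : ℕ) := by
        rw [Fintype.card_coe, Finset.card_compl, hcard, Fintype.card_fin]
      constructor
      · intro J hJ
        have hJc : Fintype.card {v : Fin L // v ∈ J} = L - (ℓ : ℕ) := by
          rw [Fintype.card_coe, hJ]
        intro w x x'
        show Nat.card {p : (Fin L → F) × R //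
            (∀ i ∈ A, Φ (Matrix.vecMul p.1 T) p.2 i = w i) ∧ ∀ j ∈ J, p.1 j = x j}
          = Nat.card {p : (Fin L → F) × R //
            (∀ i ∈ A, Φ (Matrix.vecMul p.1 T) p.2 i = w i) ∧ ∀ j ∈ J, p.1 j = x' j}
        by_cases hatt : ∃ s0 r0, ∀ i ∈ A, Φ s0 r0 i = w i
        · obtain ⟨s0, r0, hw0⟩ := hatt
          rw [count_formula T hED hPH hw0 J x, count_formula T hED hPH hw0 J x',
            secret_count T hT (I A) J s0 x, secret_count T hT (I A) J s0 x']
          have h1 := fiber_card_of_rank ((T⁻¹).submatrix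
              (fun i : {v : Fin L // v ∈ (I A)ᶜ} => (i : Fin L))
              (fun j : {v : Fin L // v ∈ J} => (j : Fin L)))
            (hIc.trans hJc.symm)
            (by rw [hJc]; exact hrank ℓ hℓ A hA J hJ)
            (fun j : {v : Fin L // v ∈ J} => x j.1 - ∑ i ∈ I A, s0 i * T⁻¹ i j.1)
          have h2 := fiber_card_of_rank ((T⁻¹).submatrix
              (fun i : {v : Fin L // v ∈ (I A)ᶜ} => (i : Fin L))
              (fun j : {v : Fin L // v ∈ J} => (j : Fin L)))
            (hIc.trans hJc.symm)
            (by rw [hJc]; exact hrank ℓ hℓ A hA J hJ)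
            (fun j : {v : Fin L // v ∈ J} => x' j.1 - ∑ i ∈ I A, s0 i * T⁻¹ i j.1)
          rw [h1, h2]
        · have e1 : IsEmpty {p : (Fin L → F) × R //
              (∀ i ∈ A, Φ (Matrix.vecMul p.1 T) p.2 i = w i) ∧ ∀ j ∈ J, p.1 j = x j} :=
            ⟨fun p => hatt ⟨Matrix.vecMul p.1.1 T, p.1.2, p.2.1⟩⟩
          have e2 : IsEmpty {p : (Fin L → F) × R //
              (∀ i ∈ A, Φ (Matrix.vecMul p.1 T) p.2 i = w i) ∧ ∀ j ∈ J, p.1 j = x' j} :=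
            ⟨fun p => hatt ⟨Matrix.vecMul p.1.1 T, p.1.2, p.2.1⟩⟩
          rw [@Nat.card_of_isEmpty _ e1, @Nat.card_of_isEmpty _ e2]
      · intro w hatt
        obtain ⟨s, r, hw0⟩ := hatt
        have hw0' : ∀ i ∈ A, Φ (Matrix.vecMul s T) r i = w i := hw0
        have hN0 : 0 < Nat.card {r' : R // ∀ i ∈ A, Φ (Matrix.vecMul s T) r' i = w i} :=
          @Nat.card_pos _ ⟨⟨r, hw0'⟩⟩ _
        constructor
        · show Nat.card {s' : Fin L → F //
              ∃ r', ∀ i ∈ A, Φ (Matrix.vecMul s' T) r' i = w i}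
            = Nat.card F ^ (L - (ℓ : ℕ))
          have hiff : ∀ s' : Fin L → F,
              (∃ r', ∀ i ∈ A, Φ (Matrix.vecMul s' T) r' i = w i)
                ↔ ∀ i ∈ I A, Matrix.vecMul s' T i = Matrix.vecMul s T i := by
            intro s'
            constructor
            · rintro ⟨r', hr'⟩ i hi
              exact hED _ r' _ r
                (fun i' hi' => (hr' i' hi').trans (hw0' i' hi').symm) i hi
            · intro h
              have hc := rcard_of_agree hED hPH hw0' h
              rw [← hc] at hN0
              rcases isEmpty_or_nonempty
                {r' : R // ∀ i ∈ A, Φ (Matrix.vecMul s' T) r' i = w i} with he | hne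
              · rw [Nat.card_of_isEmpty] at hN0
                exact absurd hN0 (lt_irrefl 0)
              · obtain ⟨⟨r', hr'⟩⟩ := hne
                exact ⟨r', hr'⟩
          rw [Nat.card_congr (Equiv.subtypeEquivRight hiff),
            compat_count T hT (I A) (Matrix.vecMul s T), Finset.card_compl, hcard,
            Fintype.card_fin]
        · intro s1 s2 h1 h2
          obtain ⟨r1, hr1⟩ := h1
          obtain ⟨r2, hr2⟩ := h2
          have hr1' : ∀ i ∈ A, Φ (Matrix.vecMul s1 T) r1 i = w i := hr1
          have hr2' : ∀ i ∈ A, Φ (Matrix.vecMul s2 T) r2 i = w i := hr2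
          have e1 : ∀ i ∈ I A, Matrix.vecMul s1 T i = Matrix.vecMul s T i :=
            hED _ r1 _ r (fun i hi => (hr1' i hi).trans (hw0' i hi).symm)
          have e2 : ∀ i ∈ I A, Matrix.vecMul s2 T i = Matrix.vecMul s T i :=
            hED _ r2 _ r (fun i hi => (hr2' i hi).trans (hw0' i hi).symm)
          show Nat.card {r' : R // ∀ i ∈ A, Φ (Matrix.vecMul s1 T) r' i = w i}
            = Nat.card {r' : R // ∀ i ∈ A, Φ (Matrix.vecMul s2 T) r' i = w i}
          rw [rcard_of_agree hED hPH hw0' e1, rcard_of_agree hED hPH hw0' e2]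
end

section
/- Let Γ_L = (𝒜₀, 𝒜₁, …, 𝒜_L) be an access structure on share indices {1, …, n} with ∅ ∈ 𝒜₀. Then there exist a finite field F, a nonempty finite randomness set R, finite share-value sets W₁, …, W_n, and a sharing map Φ : F^L × R → W₁ × ⋯ × W_n that is a strong ramp secret sharing scheme for Γ_L if and only if Ã_ℓ is monotone for every ℓ ∈ {1, …, L}. -/
/-! The power moments `t_ℓ = ∑ⱼ sⱼ αⱼ^ℓ` (`ℓ < L`) of the secret at distinct nodes `αⱼ` have the
property that, for every `k ≤ L`, the first `k` of them and any `L - k` coordinates of `s` determine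
`s` and are otherwise independent (a `k × k` Vandermonde minor is invertible). Sharing each `t_ℓ` with the cumulative scheme for the monotone family
`Ã_{ℓ+1}` (one additive piece per unqualified set `B`, handed to every party outside `B`) lets a
set `A ∈ 𝒜_k` learn exactly `t_0, …, t_{k-1}`, which gives both the perfect hiding and the exact
leakage. Conversely, enlarging a set of parties can only shrink the set of secrets compatible with
its shares, and a strong scheme fixes that number at `|F|^(L-k)` on `𝒜_k`, so the level of a
superset cannot drop. -/

open Finset

section Moments

variable {ι F : Type*} [Fintype ι] [Field F] (α : ι → F)

def moment (m : ℕ) : (ι → F) →ₗ[F] F :=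
  Fintype.linearCombination F fun j => α j ^ m

lemma moment_apply (m : ℕ) (d : ι → F) : moment α m d = ∑ j, d j * α j ^ m :=
  Fintype.linearCombination_apply F _ d

def momentKernel (k : ℕ) : Submodule F (ι → F) :=
  ⨅ m < k, LinearMap.ker (moment α m)

variable {α}

lemma mem_momentKernel {k : ℕ} {d : ι → F} :
    d ∈ momentKernel α k ↔ ∀ m < k, moment α m d = 0 := by
  simp [momentKernel]

lemma eq_zero_of_mem_momentKernel (hα : Function.Injective α) {K : Finset ι} {d : ι → F}
    (hK : ∀ j ∉ K, d j = 0) (hd : d ∈ momentKernel α #K) : d = 0 := by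
  let e := K.equivFin.symm
  have hv : (fun a => d (e a)) = 0 := by
    refine Matrix.eq_zero_of_forall_pow_sum_mul_pow_eq_zero (f := fun a => α (e a))
      (hα.comp (Subtype.val_injective.comp e.injective)) fun m => ?_
    rw [← mem_momentKernel.1 hd m m.isLt, moment_apply,
      e.sum_comp (fun j => d j * α j ^ (m : ℕ)), sum_coe_sort K (fun j => d j * α j ^ (m : ℕ))]
    exact sum_subset (subset_univ K) fun j _ hj => by rw [hK j hj, zero_mul]
  funext j
  by_cases hj : j ∈ K
  · simpa using congrFun hv (e.symm ⟨j, hj⟩)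
  · exact hK j hj

lemma momentKernel_card_eq_bot (hα : Function.Injective α) :
    momentKernel α (Fintype.card ι) = ⊥ :=
  (Submodule.eq_bot_iff _).2 fun d hd =>
    eq_zero_of_mem_momentKernel hα (K := univ) (by simp) (by simpa using hd)

variable [DecidableEq ι]

lemma exists_mem_momentKernel_eqOn (hα : Function.Injective α) {k : ℕ} {J : Finset ι}
    (hJ : #J + k = Fintype.card ι) (y : ι → F) :
    ∃ d ∈ momentKernel α k, ∀ j ∈ J, d j = y j := by
  let T : (ι → F) →ₗ[F] (Fin k → F) × (J → F) :=
    (LinearMap.pi fun m : Fin k => moment α m).prod (LinearMap.pi fun j : J => LinearMap.proj j.1)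
  have hT : Function.Injective T := by
    rw [← LinearMap.ker_eq_bot, Submodule.eq_bot_iff]
    intro d hd
    simp only [LinearMap.ker_prod, Submodule.mem_inf, LinearMap.mem_ker, funext_iff,
      LinearMap.pi_apply, Pi.zero_apply, LinearMap.coe_proj, Function.eval, Subtype.forall, T] at hd
    refine eq_zero_of_mem_momentKernel hα (K := Jᶜ) (fun j hj => hd.2 j (by simpa using hj)) <|
      mem_momentKernel.2 fun m hm => hd.1 ⟨m, by rw [card_compl] at hm; omega⟩
  obtain ⟨d, hd⟩ := (LinearMap.injective_iff_surjective_of_finrank_eq_finrank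
    (by simp; omega)).1 hT (0, fun j => y j)
  simp only [LinearMap.prod_apply, Function.prod_apply, Prod.ext_iff, funext_iff,
    LinearMap.pi_apply, Pi.zero_apply, LinearMap.coe_proj, Function.eval, Subtype.forall, T] at hd
  exact ⟨d, mem_momentKernel.2 fun m hm => hd.1 ⟨m, hm⟩, hd.2⟩

lemma card_momentKernel [Finite F] (hα : Function.Injective α) {k : ℕ}
    (hk : k ≤ Fintype.card ι) :
    Nat.card (momentKernel α k) = Nat.card F ^ (Fintype.card ι - k) := by
  obtain ⟨J, -, hJ⟩ :=
    exists_subset_card_eq (s := (univ : Finset ι)) (n := Fintype.card ι - k) (by simp)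
  have hJk : #J + k = Fintype.card ι := by omega
  have hrestrict : Function.Bijective fun d : momentKernel α k => fun j : J => d.1 j.1 := by
    refine ⟨fun d d' hdd' => Subtype.ext (sub_eq_zero.1 ?_), fun y => ?_⟩
    · refine eq_zero_of_mem_momentKernel hα (K := Jᶜ) (fun j hj => ?_) ?_
      · simpa [sub_eq_zero] using congrFun hdd' ⟨j, by simpa using hj⟩
      · rw [card_compl]
        simpa [show Fintype.card ι - #J = k by omega] using sub_mem d.2 d'.2
    · obtain ⟨d, hd, hdJ⟩ :=
        exists_mem_momentKernel_eqOn hα hJk fun j => if h : j ∈ J then y ⟨j, h⟩ else 0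
      exact ⟨⟨d, hd⟩, funext fun j => by simp [hdJ j j.2]⟩
  rw [Nat.card_eq_of_bijective _ hrestrict, Nat.card_fun, Nat.card_eq_finsetCard, hJ]

end Moments

section CumulativeShares

variable {F : Type*} [Field F] {L n : ℕ}

lemma IsAccessStructure.eq_of_mem {𝒜 : Fin (L + 1) → Set (Finset (Fin n))}
    (hAS : IsAccessStructure 𝒜) {A : Finset (Fin n)} {k k' : Fin (L + 1)}
    (h : A ∈ 𝒜 k) (h' : A ∈ 𝒜 k') : k = k' := by
  by_contra hne
  exact (Set.eq_empty_iff_forall_notMem.1 (hAS.1 k k' hne)) A ⟨h, h'⟩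

lemma IsAccessStructure.tildeMem_iff {𝒜 : Fin (L + 1) → Set (Finset (Fin n))}
    (hAS : IsAccessStructure 𝒜) {A : Finset (Fin n)} {k : Fin (L + 1)} (hA : A ∈ 𝒜 k)
    (ℓ : Fin (L + 1)) : TildeMem 𝒜 ℓ A ↔ ℓ ≤ k :=
  ⟨fun ⟨_, hk', hA'⟩ => hAS.eq_of_mem hA' hA ▸ hk', fun h => ⟨k, h, hA⟩⟩

variable (𝒜 : Fin (L + 1) → Set (Finset (Fin n))) (α : Fin L → F)

open Classical in
noncomputable def unqualified (ℓ : Fin L) : Finset (Finset (Fin n)) :=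
  {B | ¬ TildeMem 𝒜 ℓ.succ B}

noncomputable def sharePiece (s : Fin L → F) (r : Fin L → Finset (Fin n) → F) (ℓ : Fin L)
    (B : Finset (Fin n)) : F :=
  -- `∅ ∈ 𝒜 0` is unqualified at every level; its piece makes the pieces sum to `t_ℓ`
  if B = ∅ then moment α ℓ s - ∑ B' ∈ (unqualified 𝒜 ℓ).erase ∅, r ℓ B' else r ℓ B

open Classical in
noncomputable def cumulativeShares (s : Fin L → F) (r : Fin L → Finset (Fin n) → F)
    (i : Fin n) : Fin L → Finset (Fin n) → F :=
  fun ℓ B => if B ∈ unqualified 𝒜 ℓ ∧ i ∉ B then sharePiece 𝒜 α s r ℓ B else 0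

def randomShift (A : Finset (Fin n)) (d : Fin L → F) : Fin L → Finset (Fin n) → F :=
  fun ℓ B => if B = A then moment α ℓ d else 0

variable {𝒜 α}

lemma mem_unqualified {ℓ : Fin L} {B : Finset (Fin n)} :
    B ∈ unqualified 𝒜 ℓ ↔ ¬ TildeMem 𝒜 ℓ.succ B := by
  simp [unqualified]

lemma mem_unqualified_iff_le (hAS : IsAccessStructure 𝒜) {A : Finset (Fin n)}
    {k : Fin (L + 1)} (hA : A ∈ 𝒜 k) {ℓ : Fin L} :
    A ∈ unqualified 𝒜 ℓ ↔ (k : ℕ) ≤ ℓ := by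
  rw [mem_unqualified, hAS.tildeMem_iff hA, Fin.le_def, Fin.val_succ]
  omega

lemma sum_sharePiece (hAS : IsAccessStructure 𝒜) (hempty : (∅ : Finset (Fin n)) ∈ 𝒜 0)
    (s : Fin L → F) (r : Fin L → Finset (Fin n) → F) (ℓ : Fin L) :
    ∑ B ∈ unqualified 𝒜 ℓ, sharePiece 𝒜 α s r ℓ B = moment α ℓ s := by
  have hempty' : ∅ ∈ unqualified 𝒜 ℓ := (mem_unqualified_iff_le hAS hempty).2 (by simp)
  have hrest : ∑ B ∈ (unqualified 𝒜 ℓ).erase ∅, sharePiece 𝒜 α s r ℓ B =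
      ∑ B ∈ (unqualified 𝒜 ℓ).erase ∅, r ℓ B :=
    sum_congr rfl fun B hB => if_neg (mem_erase.1 hB).1
  rw [← sum_erase_add _ _ hempty', hrest, sharePiece, if_pos rfl]
  abel

lemma moment_eq_of_cumulativeShares_eq (hAS : IsAccessStructure 𝒜)
    (hempty : (∅ : Finset (Fin n)) ∈ 𝒜 0)
    (hmono : ∀ ℓ : Fin (L + 1), 1 ≤ (ℓ : ℕ) → TildeMonotone 𝒜 ℓ)
    {A : Finset (Fin n)} {k : Fin (L + 1)} (hA : A ∈ 𝒜 k)
    {s s' : Fin L → F} {r r' : Fin L → Finset (Fin n) → F}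
    (hw : ∀ i ∈ A, cumulativeShares 𝒜 α s r i = cumulativeShares 𝒜 α s' r' i)
    {ℓ : Fin L} (hℓ : (ℓ : ℕ) < k) : moment α ℓ s = moment α ℓ s' := by
  rw [← sum_sharePiece hAS hempty s r, ← sum_sharePiece hAS hempty s' r']
  refine sum_congr rfl fun B hB => ?_
  -- every piece at level `ℓ` is held by a member of `A`, since `A ∈ Ã_{ℓ+1}`
  have hAB : ¬ A ⊆ B := fun hAB => mem_unqualified.1 hB <|
    hmono ℓ.succ (by simp) A B ((hAS.tildeMem_iff hA _).2 (by simp [Fin.le_def]; omega)) hAB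
  obtain ⟨i, hiA, hiB⟩ := not_subset.1 hAB
  simpa [cumulativeShares, hB, hiB] using congrFun (congrFun (hw i hiA) ℓ) B

lemma cumulativeShares_add_randomShift (hAS : IsAccessStructure 𝒜) {A : Finset (Fin n)}
    {k : Fin (L + 1)} (hA : A ∈ 𝒜 k) {d : Fin L → F} (hd : d ∈ momentKernel α k)
    (s : Fin L → F) (r : Fin L → Finset (Fin n) → F) {i : Fin n} (hi : i ∈ A) :
    cumulativeShares 𝒜 α (s + d) (r + randomShift α A d) i = cumulativeShares 𝒜 α s r i := by
  funext ℓ B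
  by_cases hB : B ∈ unqualified 𝒜 ℓ ∧ i ∉ B
  swap
  · simp only [cumulativeShares, if_neg hB]
  have hBA : B ≠ A := fun h => hB.2 (h ▸ hi)
  simp only [cumulativeShares, if_pos hB, sharePiece]
  split_ifs with hB0
  · have hshift :
        ∑ B' ∈ (unqualified 𝒜 ℓ).erase ∅, randomShift α A d ℓ B' = moment α ℓ d := by
      by_cases hkℓ : (k : ℕ) ≤ ℓ
      · have hA' : A ∈ (unqualified 𝒜 ℓ).erase ∅ :=
          mem_erase.2 ⟨ne_empty_of_mem hi, (mem_unqualified_iff_le hAS hA).2 hkℓ⟩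
        simp [randomShift, hA']
      · simp [randomShift, mem_momentKernel.1 hd ℓ (by omega)]
    simp only [Pi.add_apply, map_add, sum_add_distrib, hshift]
    abel
  · simp [randomShift, hBA]

lemma exists_cumulativeShares_eq_iff (hAS : IsAccessStructure 𝒜)
    (hempty : (∅ : Finset (Fin n)) ∈ 𝒜 0)
    (hmono : ∀ ℓ : Fin (L + 1), 1 ≤ (ℓ : ℕ) → TildeMonotone 𝒜 ℓ)
    {A : Finset (Fin n)} {k : Fin (L + 1)} (hA : A ∈ 𝒜 k)
    {s₀ s : Fin L → F} {r₀ : Fin L → Finset (Fin n) → F}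
    {w : Fin n → Fin L → Finset (Fin n) → F}
    (hw : ∀ i ∈ A, cumulativeShares 𝒜 α s₀ r₀ i = w i) :
    (∃ r, ∀ i ∈ A, cumulativeShares 𝒜 α s r i = w i) ↔ s - s₀ ∈ momentKernel α k := by
  refine ⟨fun ⟨r, hr⟩ => mem_momentKernel.2 fun m hm => ?_, fun hd => ?_⟩
  · have hmL : m < L := by omega
    rw [map_sub, sub_eq_zero]
    exact moment_eq_of_cumulativeShares_eq (ℓ := ⟨m, hmL⟩) hAS hempty hmono hA
      (fun i hi => (hr i hi).trans (hw i hi).symm) hm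
  · refine ⟨r₀ + randomShift α A (s - s₀), fun i hi => ?_⟩
    rw [← hw i hi, ← cumulativeShares_add_randomShift hAS hA hd s₀ r₀ hi, add_sub_cancel]

end CumulativeShares

section StrongScheme

variable {F : Type*} [Field F] {L n : ℕ} {𝒜 : Fin (L + 1) → Set (Finset (Fin n))}
  {α : Fin L → F}

lemma perfectlyHidden_cumulativeShares (hAS : IsAccessStructure 𝒜) (hα : Function.Injective α)
    {A : Finset (Fin n)} {k : Fin (L + 1)} (hA : A ∈ 𝒜 k) {J : Finset (Fin L)}
    (hJ : #J + k = L) : PerfectlyHidden (cumulativeShares 𝒜 α) A J := by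
  intro w x x'
  obtain ⟨d, hd, hdJ⟩ := exists_mem_momentKernel_eqOn hα (by simpa using hJ) (x' - x)
  refine Nat.card_congr (Equiv.subtypeEquiv (Equiv.addRight (d, randomShift α A d)) fun p => ?_)
  simp only [Equiv.coe_addRight, Prod.fst_add, Prod.snd_add]
  refine and_congr (forall₂_congr fun i hi => ?_) (forall₂_congr fun j hj => ?_)
  · rw [cumulativeShares_add_randomShift hAS hA hd _ _ hi]
  · rw [Pi.add_apply, hdJ j hj, Pi.sub_apply]
    constructor <;> intro h <;> linear_combination h

lemma card_compatible_cumulativeShares [Finite F] (hAS : IsAccessStructure 𝒜)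
    (hempty : (∅ : Finset (Fin n)) ∈ 𝒜 0)
    (hmono : ∀ ℓ : Fin (L + 1), 1 ≤ (ℓ : ℕ) → TildeMonotone 𝒜 ℓ) (hα : Function.Injective α)
    {A : Finset (Fin n)} {k : Fin (L + 1)} (hA : A ∈ 𝒜 k)
    {w : Fin n → Fin L → Finset (Fin n) → F}
    (hw : ∃ s r, ∀ i ∈ A, cumulativeShares 𝒜 α s r i = w i) :
    Nat.card {s // ∃ r, ∀ i ∈ A, cumulativeShares 𝒜 α s r i = w i} = Nat.card F ^ (L - k) := by
  obtain ⟨s₀, r₀, hw⟩ := hw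
  calc _ = Nat.card (momentKernel α k) := Nat.card_congr <|
        Equiv.subtypeEquiv (Equiv.subRight s₀) fun s =>
          exists_cumulativeShares_eq_iff hAS hempty hmono hA hw
    _ = _ := by rw [card_momentKernel hα (by simpa using k.is_le), Fintype.card_fin]

lemma card_randomness_cumulativeShares (hAS : IsAccessStructure 𝒜)
    (hempty : (∅ : Finset (Fin n)) ∈ 𝒜 0)
    (hmono : ∀ ℓ : Fin (L + 1), 1 ≤ (ℓ : ℕ) → TildeMonotone 𝒜 ℓ)
    {A : Finset (Fin n)} {k : Fin (L + 1)} (hA : A ∈ 𝒜 k)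
    {w : Fin n → Fin L → Finset (Fin n) → F} {s s' : Fin L → F}
    (hs : ∃ r, ∀ i ∈ A, cumulativeShares 𝒜 α s r i = w i)
    (hs' : ∃ r, ∀ i ∈ A, cumulativeShares 𝒜 α s' r i = w i) :
    Nat.card {r // ∀ i ∈ A, cumulativeShares 𝒜 α s r i = w i} =
      Nat.card {r // ∀ i ∈ A, cumulativeShares 𝒜 α s' r i = w i} := by
  obtain ⟨r₀, hr₀⟩ := hs
  have hd : s' - s ∈ momentKernel α k :=
    (exists_cumulativeShares_eq_iff hAS hempty hmono hA hr₀).1 hs'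
  refine Nat.card_congr (Equiv.subtypeEquiv (Equiv.addRight (randomShift α A (s' - s)))
    fun r => forall₂_congr fun i hi => ?_)
  rw [Equiv.coe_addRight, ← cumulativeShares_add_randomShift hAS hA hd s r hi, add_sub_cancel]

theorem isStrongRampScheme_cumulativeShares [Finite F] (hAS : IsAccessStructure 𝒜)
    (hempty : (∅ : Finset (Fin n)) ∈ 𝒜 0)
    (hmono : ∀ ℓ : Fin (L + 1), 1 ≤ (ℓ : ℕ) → TildeMonotone 𝒜 ℓ) (hα : Function.Injective α) :
    IsStrongRampScheme (cumulativeShares 𝒜 α) 𝒜 := by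
  refine ⟨fun A hA s r s' r' hw => ?_, fun k hk A hA => ⟨fun J hJ => ?_, fun w hw => ?_⟩⟩
  · have hd := (exists_cumulativeShares_eq_iff hAS hempty hmono hA (fun _ _ => rfl)).1 ⟨r, hw⟩
    have hbot := momentKernel_card_eq_bot hα
    rw [Fintype.card_fin] at hbot
    rw [Fin.val_last, hbot] at hd
    exact sub_eq_zero.1 hd
  · exact perfectlyHidden_cumulativeShares hAS hα hA (by omega)
  · exact ⟨card_compatible_cumulativeShares hAS hempty hmono hα hA hw,
      fun s s' => card_randomness_cumulativeShares hAS hempty hmono hA⟩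

end StrongScheme

section Necessity

variable {F R : Type*} {L n : ℕ} {W : Fin n → Type*} {Φ : (Fin L → F) → R → ∀ i, W i}
  {𝒜 : Fin (L + 1) → Set (Finset (Fin n))}

lemma IsStrongRampScheme.card_compatible (hΦ : IsStrongRampScheme Φ 𝒜) {A : Finset (Fin n)}
    {k : Fin (L + 1)} (hA : A ∈ 𝒜 k) {w : ∀ i, W i} (hw : ∃ s r, ∀ i ∈ A, Φ s r i = w i) :
    Nat.card {s // ∃ r, ∀ i ∈ A, Φ s r i = w i} = Nat.card F ^ (L - k) := by
  rcases (Fin.le_last k).lt_or_eq with hk | rfl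
  · exact ((hΦ.2 k hk A hA).2 w hw).1
  · obtain ⟨s₀, r₀, hs₀⟩ := hw
    rw [Fin.val_last, Nat.sub_self, pow_zero, Nat.card_eq_one_iff_unique]
    refine ⟨⟨fun ⟨s, r, hr⟩ ⟨s', r', hr'⟩ => Subtype.ext <|
      hΦ.1 A hA s r s' r' fun i hi => (hr i hi).trans (hr' i hi).symm⟩, ⟨⟨s₀, r₀, hs₀⟩⟩⟩

theorem IsStrongRampScheme.tildeMonotone [Finite F] [Nontrivial F] [Nonempty R]
    (hAS : IsAccessStructure 𝒜) (hΦ : IsStrongRampScheme Φ 𝒜) (ℓ : Fin (L + 1)) :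
    TildeMonotone 𝒜 ℓ := by
  rintro A A' ⟨k, hℓk, hA⟩ hAA'
  obtain ⟨k', hA'⟩ := hAS.2 A'
  refine ⟨k', hℓk.trans ?_, hA'⟩
  obtain ⟨s₀⟩ : Nonempty (Fin L → F) := inferInstance
  obtain ⟨r₀⟩ := ‹Nonempty R›
  have hle : Nat.card F ^ (L - k') ≤ Nat.card F ^ (L - k) := by
    rw [← hΦ.card_compatible hA' ⟨s₀, r₀, fun _ _ => rfl⟩,
      ← hΦ.card_compatible hA ⟨s₀, r₀, fun _ _ => rfl⟩]
    exact Nat.card_le_card_of_injective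
      (fun s => ⟨s.1, s.2.imp fun _ hr i hi => hr i (hAA' hi)⟩) fun s s' h => by
        simpa [Subtype.ext_iff] using h
  have hsub := (Nat.pow_le_pow_iff_right Finite.one_lt_card).1 hle
  have hkL := k.is_le
  rw [Fin.le_def]
  omega

end Necessity

theorem strong_ramp_scheme_exists_iff_monotone_general (L n : ℕ)
    (𝒜 : Fin (L + 1) → Set (Finset (Fin n))) (hAS : IsAccessStructure 𝒜)
    (hempty : (∅ : Finset (Fin n)) ∈ 𝒜 0) :
    (∃ (F : Type) (_ : Field F) (_ : Fintype F) (R : Type) (_ : Fintype R)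
        (_ : Nonempty R) (W : Fin n → Type) (_ : ∀ i, Fintype (W i))
        (Φ : (Fin L → F) → R → ∀ i, W i), IsStrongRampScheme Φ 𝒜) ↔
      ∀ ℓ : Fin (L + 1), 1 ≤ (ℓ : ℕ) → TildeMonotone 𝒜 ℓ := by
  constructor
  · rintro ⟨F, _, _, R, _, _, W, _, Φ, hΦ⟩ ℓ -
    exact hΦ.tildeMonotone hAS ℓ
  · intro hmono
    obtain ⟨p, hLp, hp⟩ := Nat.exists_infinite_primes L
    have := Fact.mk hp
    obtain ⟨α⟩ : Nonempty (Fin L ↪ ZMod p) :=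
      Function.Embedding.nonempty_of_card_le (by simpa using hLp)
    exact ⟨ZMod p, inferInstance, inferInstance, _, inferInstance, inferInstance, _,
      fun _ => inferInstance, cumulativeShares 𝒜 α,
      isStrongRampScheme_cumulativeShares hAS hempty hmono α.injective⟩

/-- For an access structure `Γ_L = (𝒜₀, …, 𝒜_L)` on share indices
`{1,…,n}` with `∅ ∈ 𝒜₀`, there exist a finite field `F`, a nonempty finite
randomness set `R`, finite share-value sets `W₁, …, W_n` and a sharing map
`Φ : F^L × R → W₁ × ⋯ × W_n` that is a strong ramp secret sharing scheme for `Γ_L`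
if and only if `Ã_ℓ` is monotone for every `ℓ ∈ {1,…,L}`. -/
theorem strong_ramp_scheme_exists_iff_monotone (L n : ℕ) (hL : 0 < L) (hn : 0 < n)
    (𝒜 : Fin (L + 1) → Set (Finset (Fin n))) (hAS : IsAccessStructure 𝒜)
    (hempty : (∅ : Finset (Fin n)) ∈ 𝒜 0) :
    (∃ (F : Type) (_ : Field F) (_ : Fintype F) (R : Type) (_ : Fintype R)
        (_ : Nonempty R) (W : Fin n → Type) (_ : ∀ i, Fintype (W i))
        (Φ : (Fin L → F) → R → ∀ i, W i), IsStrongRampScheme Φ 𝒜) ↔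
      ∀ ℓ : Fin (L + 1), 1 ≤ (ℓ : ℕ) → TildeMonotone 𝒜 ℓ :=
  strong_ramp_scheme_exists_iff_monotone_general L n 𝒜 hAS hempty
end

section
/- Let Φ be a partially decryptable (PD) ramp secret sharing scheme for an access structure Γ_L over a finite field F. Then for every ℓ ∈ {0, …, L}, every A ∈ 𝒜_ℓ, and every value w attained by Φ_A, the number of secrets s ∈ F^L compatible with w (i.e. such that Φ_A(s, r) = w for some r ∈ R) equals |F|^{L−ℓ}, and #{r ∈ R : Φ_A(s, r) = w} is the same for all compatible s. (This is the counting equivalent, for uniform inputs, of the ramp condition H(S | Φ_A) = ((L−ℓ)/L)·H(S), so every PD ramp secret sharing scheme is a ramp secret sharing scheme.) -/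
/-- Every PD ramp secret sharing scheme is a ramp secret sharing
scheme: for every `ℓ`, every `A ∈ 𝒜 ℓ` and every attained value `w` of the shares
in `A`, exactly `|F|^(L-ℓ)` secrets are compatible with `w`, each in equally many
ways (the counting equivalent of `H(S | Φ_A) = ((L-ℓ)/L)·H(S)`). -/
theorem isPDRampScheme_is_ramp (F : Type*) [Field F] [Fintype F] (L n : ℕ)
    (hL : 0 < L) (R : Type*) [Fintype R] [Nonempty R]
    (W : Fin n → Type*) [∀ i, Fintype (W i)]
    (𝒜 : Fin (L + 1) → Set (Finset (Fin n))) (hAS : IsAccessStructure 𝒜)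
    (Φ : (Fin L → F) → R → ∀ i, W i) (hPD : IsPDRampScheme Φ 𝒜) :
    ∀ (ℓ : Fin (L + 1)) (A : Finset (Fin n)), A ∈ 𝒜 ℓ →
      ∀ w : ∀ i, W i, (∃ s r, ∀ i ∈ A, Φ s r i = w i) →
        (Nat.card {s : Fin L → F // ∃ r, ∀ i ∈ A, Φ s r i = w i}
            = Fintype.card F ^ (L - (ℓ : ℕ))) ∧
        ∀ s s' : Fin L → F, (∃ r, ∀ i ∈ A, Φ s r i = w i) →
          (∃ r, ∀ i ∈ A, Φ s' r i = w i) →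
          Nat.card {r : R // ∀ i ∈ A, Φ s r i = w i}
            = Nat.card {r : R // ∀ i ∈ A, Φ s' r i = w i} := by
  intro ℓ A hA w hw
  classical
  obtain ⟨I, hIcard, hED, hPH⟩ := hPD ℓ A hA
  obtain ⟨s₀, r₀, hw0⟩ := hw
  -- any compatible secret agrees with s₀ on I
  have hdec : ∀ s (r : R), (∀ i ∈ A, Φ s r i = w i) → ∀ j ∈ I, s j = s₀ j := by
    intro s r h j hj
    exact hED s r s₀ r₀ (fun i hi => (h i hi).trans (hw0 i hi).symm) j hj
  set T : (Fin L → F) → Type _ := fun x => {p : (Fin L → F) × R //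
      (∀ i ∈ A, Φ p.1 p.2 i = w i) ∧ ∀ j ∈ Iᶜ, p.1 j = x j} with hTdef
  have hPH' : ∀ x x' : Fin L → F, Nat.card (T x) = Nat.card (T x') :=
    fun x x' => hPH w x x'
  have hcount : ∀ x : Fin L → F, (∀ j ∈ I, x j = s₀ j) →
      Nat.card (T x) = Nat.card {r : R // ∀ i ∈ A, Φ x r i = w i} := by
    intro x hx
    have key : ∀ p : T x, p.1.1 = x := by
      rintro ⟨⟨s, r⟩, hr, hc⟩
      funext j
      show s j = x j
      by_cases hj : j ∈ I
      · rw [hdec s r hr j hj, hx j hj]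
      · exact hc j (Finset.mem_compl.mpr hj)
    refine Nat.card_congr
      ⟨fun p => ⟨p.1.2, ?_⟩, fun r => ⟨(x, r.1), r.2, fun j _ => rfl⟩, ?_, ?_⟩
    · intro i hi
      have h := p.2.1 i hi
      rwa [key p] at h
    · intro p
      apply Subtype.ext
      exact Prod.ext (key p).symm rfl
    · intro r; rfl
  have hne : Nonempty (T s₀) := ⟨⟨(s₀, r₀), hw0, fun j _ => rfl⟩⟩
  have hcompat : ∀ x : Fin L → F, (∀ j ∈ I, x j = s₀ j) →
      ∃ r, ∀ i ∈ A, Φ x r i = w i := by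
    intro x hx
    have h1 : 0 < Nat.card {r : R // ∀ i ∈ A, Φ x r i = w i} := by
      rw [← hcount x hx, hPH' x s₀]
      exact @Nat.card_pos _ hne _
    obtain ⟨⟨r, hr⟩⟩ := (Nat.card_pos_iff.mp h1).1
    exact ⟨r, hr⟩
  constructor
  · -- counting compatible secrets
    set P : ((Iᶜ : Finset (Fin L)) → F) → (Fin L → F) :=
      fun x j => if h : j ∈ I then s₀ j else x ⟨j, Finset.mem_compl.mpr h⟩ with hPdef
    have hPI : ∀ x, ∀ j ∈ I, P x j = s₀ j := by
      intro x j hj; simp [hPdef, hj]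
    have e : {s : Fin L → F // ∃ r, ∀ i ∈ A, Φ s r i = w i} ≃
        ((Iᶜ : Finset (Fin L)) → F) := by
      refine ⟨fun s => fun j => s.1 j.1, fun x => ⟨P x, hcompat (P x) (hPI x)⟩, ?_, ?_⟩
      · rintro ⟨s, r, hr⟩
        apply Subtype.ext
        funext j
        by_cases hj : j ∈ I
        · simpa [hPdef, hj] using (hdec s r hr j hj).symm
        · simp [hPdef, hj]
      · intro x
        funext j
        have : (j : Fin L) ∉ I := Finset.mem_compl.mp j.2
        simp [hPdef, this]
    rw [Nat.card_congr e, Nat.card_eq_fintype_card, Fintype.card_fun,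
      Fintype.card_coe, Finset.card_compl, hIcard, Fintype.card_fin]
  · intro s s' hs hs'
    obtain ⟨r, hr⟩ := hs
    obtain ⟨r', hr'⟩ := hs'
    rw [← hcount s (hdec s r hr), ← hcount s' (hdec s' r' hr')]
    exact hPH' s s'
end

section
/- Let F be a field, L a positive integer, and x, y : Fin L → F with x i + y j ≠ 0 for all i, j, and let T_H be the Hilbert-type (Cauchy) matrix with entries (x i + y j)⁻¹. Then every square submatrix of T_H (obtained by selecting any u distinct rows i₁, …, i_u and any u distinct columns j₁, …, j_u, 1 ≤ u ≤ L) is invertible if and only if x is injective and y is injective. -/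
open Polynomial Finset

lemma cauchy_det_ne_zero {F : Type*} [Field F] {u : ℕ} (a b : Fin u → F)
    (ha : Function.Injective a) (hb : Function.Injective b)
    (hab : ∀ i j, a i + b j ≠ 0) :
    (Matrix.of fun i j : Fin u => (a i + b j)⁻¹).det ≠ 0 := by
  intro hdet
  obtain ⟨v, hv, hmv⟩ := Matrix.exists_mulVec_eq_zero_iff.2 hdet
  obtain ⟨j₀, hj₀⟩ := Function.ne_iff.1 hv
  set P : F[X] := ∑ j : Fin u, C (v j) * ∏ k ∈ univ.erase j, (X + C (b k)) with hP
  have hdeg : P.natDegree < u := by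
    have hu : 0 < u := j₀.pos
    have hle : P.natDegree ≤ u - 1 := by
      apply Polynomial.natDegree_sum_le_of_forall_le
      intro j _
      calc (C (v j) * ∏ k ∈ univ.erase j, (X + C (b k))).natDegree
          ≤ (C (v j)).natDegree + (∏ k ∈ univ.erase j, (X + C (b k))).natDegree :=
            natDegree_mul_le
        _ ≤ 0 + ∑ k ∈ univ.erase j, (X + C (b k)).natDegree := by
            gcongr
            · exact le_of_eq (natDegree_C _)
            · exact natDegree_prod_le _ _
        _ ≤ 0 + ∑ k ∈ univ.erase j, 1 := by
            gcongr with k hk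
            exact le_of_eq (natDegree_X_add_C _)
        _ = u - 1 := by simp [Finset.card_erase_of_mem]
    exact lt_of_le_of_lt hle (Nat.sub_lt hu one_pos)
  have hPz : P = 0 := by
    apply Polynomial.eq_zero_of_natDegree_lt_card_of_eval_eq_zero P ha _ (by simpa using hdeg)
    intro i
    have h0 : ∑ j : Fin u, (a i + b j)⁻¹ * v j = 0 := congrFun hmv i
    have : P.eval (a i) = (∑ j : Fin u, (a i + b j)⁻¹ * v j) * ∏ k : Fin u, (a i + b k) := by
      rw [hP, Finset.sum_mul]
      simp only [eval_finset_sum, eval_mul, eval_C, eval_prod, eval_add, eval_X]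
      refine Finset.sum_congr rfl fun j _ => ?_
      rw [← Finset.mul_prod_erase univ _ (Finset.mem_univ j)]
      field_simp [hab i j]
    rw [this, h0, zero_mul]
  apply hj₀
  have := congrArg (Polynomial.eval (-(b j₀))) hPz
  rw [hP] at this
  simp only [eval_finset_sum, eval_mul, eval_C, eval_prod, eval_add, eval_X, eval_zero] at this
  have hsum : (∑ j : Fin u, v j * ∏ k ∈ univ.erase j, (-b j₀ + b k))
      = v j₀ * ∏ k ∈ univ.erase j₀, (-b j₀ + b k) := by
    apply Finset.sum_eq_single
    · intro j _ hj
      rw [Finset.prod_eq_zero (Finset.mem_erase.2 ⟨Ne.symm hj, Finset.mem_univ j₀⟩)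
        (by ring), mul_zero]
    · simp
  rw [hsum] at this
  rcases mul_eq_zero.1 this with h | h
  · exact h
  · refine absurd h (Finset.prod_ne_zero_iff.2 fun k hk => ?_)
    simp only [Finset.mem_erase] at hk
    intro hc
    exact hk.1 (hb (by linear_combination hc))

/-- For a Hilbert-type (Cauchy) matrix `T_H` with entries
`(x i + y j)⁻¹` (where `x i + y j ≠ 0` for all `i, j`), every square submatrix
— obtained by selecting any `u ≥ 1` distinct rows and `u` distinct columns —
is invertible if and only if `x` and `y` are both injective. -/
theorem hilbert_type_submatrices_invertible_iff (F : Type*) [Field F] (L : ℕ)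
    (hL : 0 < L) (x y : Fin L → F) (h : ∀ i j, x i + y j ≠ 0) :
    (∀ (u : ℕ), 0 < u → ∀ rsel csel : Fin u → Fin L,
        Function.Injective rsel → Function.Injective csel →
        IsUnit ((Matrix.of fun i j : Fin L => (x i + y j)⁻¹).submatrix rsel csel).det) ↔
      Function.Injective x ∧ Function.Injective y := by
  constructor
  · intro H
    constructor
    · intro i i' hxe
      by_contra hne
      have hinj : Function.Injective ![i, i'] := by
        intro p q hpq
        fin_cases p <;> fin_cases q <;>
          first
          | rfl
          | (exact absurd (by simpa using hpq) hne)
          | (exact absurd (by simpa using hpq.symm) hne)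
      have hu := H 2 (by norm_num) ![i, i'] ![i, i'] hinj hinj
      rw [isUnit_iff_ne_zero] at hu
      apply hu
      rw [Matrix.det_fin_two]
      simp only [Matrix.submatrix_apply, Matrix.of_apply, Matrix.cons_val_zero,
        Matrix.cons_val_one, Matrix.head_cons]
      rw [hxe]
      ring
    · intro j j' hye
      by_contra hne
      have hinj : Function.Injective ![j, j'] := by
        intro p q hpq
        fin_cases p <;> fin_cases q <;>
          first
          | rfl
          | (exact absurd (by simpa using hpq) hne)
          | (exact absurd (by simpa using hpq.symm) hne)
      have hu := H 2 (by norm_num) ![j, j'] ![j, j'] hinj hinj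
      rw [isUnit_iff_ne_zero] at hu
      apply hu
      rw [Matrix.det_fin_two]
      simp only [Matrix.submatrix_apply, Matrix.of_apply, Matrix.cons_val_zero,
        Matrix.cons_val_one, Matrix.head_cons]
      rw [hye]
      ring
  · rintro ⟨hx, hy⟩ u hu rsel csel hr hc
    rw [isUnit_iff_ne_zero]
    exact cauchy_det_ne_zero (x ∘ rsel) (y ∘ csel) (hx.comp hr) (hy.comp hc)
      (fun i j => h _ _)
end

section
/- In the Okada–Kurosawa ramp scheme over a finite field F: (i) the secret pair (s₁, s₂) is determined by the shares (V₁, V₂, V₃), i.e. if two inputs (s₁, s₂, r₁, r₂, r₃, r₄) and (s₁', s₂', r₁', r₂', r₃', r₄') yield the same values of V₁, V₂ and V₃, then s₁ = s₁' and s₂ = s₂'; (ii) the partial secret s₁ is determined by (V₁, V₄); and (iii) the partial secret s₁ is determined by (V₂, V₄). -/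
/-- In the Okada–Kurosawa ramp scheme over a finite field `F`,
with shares `V₁ = (r₁, r₃)`, `V₂ = (r₂, r₄)`, `V₃ = (r₁+r₄+s₁, r₂+r₃+s₂)`,
`V₄ = (r₁+s₁, r₂+s₁)`:
(i) the secret pair `(s₁, s₂)` is determined by `(V₁, V₂, V₃)`;
(ii) the partial secret `s₁` is determined by `(V₁, V₄)`;
(iii) the partial secret `s₁` is determined by `(V₂, V₄)`. -/
theorem okada_kurosawa_decryption (F : Type*) [Field F] [Fintype F] :
    (∀ s₁ s₂ r₁ r₂ r₃ r₄ s₁' s₂' r₁' r₂' r₃' r₄' : F,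
      ((r₁, r₃) : F × F) = (r₁', r₃') →
      ((r₂, r₄) : F × F) = (r₂', r₄') →
      ((r₁ + r₄ + s₁, r₂ + r₃ + s₂) : F × F) = (r₁' + r₄' + s₁', r₂' + r₃' + s₂') →
      s₁ = s₁' ∧ s₂ = s₂') ∧
    (∀ s₁ s₂ r₁ r₂ r₃ r₄ s₁' s₂' r₁' r₂' r₃' r₄' : F,
      ((r₁, r₃) : F × F) = (r₁', r₃') →
      ((r₁ + s₁, r₂ + s₁) : F × F) = (r₁' + s₁', r₂' + s₁') →
      s₁ = s₁') ∧
    (∀ s₁ s₂ r₁ r₂ r₃ r₄ s₁' s₂' r₁' r₂' r₃' r₄' : F,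
      ((r₂, r₄) : F × F) = (r₂', r₄') →
      ((r₁ + s₁, r₂ + s₁) : F × F) = (r₁' + s₁', r₂' + s₁') →
      s₁ = s₁') := by
  refine ⟨?_, ?_, ?_⟩ <;>
    intro s₁ s₂ r₁ r₂ r₃ r₄ s₁' s₂' r₁' r₂' r₃' r₄' <;>
    simp only [Prod.mk.injEq, and_imp] <;>
    intro h1 h2 h3 h4
  · intro h5 h6
    subst h1 h2 h3 h4
    exact ⟨by linear_combination h5, by linear_combination h6⟩
  · subst h1 h2
    linear_combination h3
  · subst h1 h2
    linear_combination h4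
end

section
/- In the Okada–Kurosawa ramp scheme over a finite field F, the share pair (V₁, V₄) reveals nothing about the partial secret s₂: for every pair of values (w₁, w₄) ∈ (F × F)² and every a, a' ∈ F, #{(s₁, s₂, r₁, r₂, r₃, r₄) ∈ F⁶ : V₁ = w₁, V₄ = w₄, s₂ = a} = #{(s₁, s₂, r₁, r₂, r₃, r₄) ∈ F⁶ : V₁ = w₁, V₄ = w₄, s₂ = a'}. (This is the counting equivalent of H(S₂ | V₁V₄) = H(S₂).) -/
/-- In the Okada–Kurosawa ramp scheme over a finite field `F`,
the share pair `(V₁, V₄) = ((r₁, r₃), (r₁+s₁, r₂+s₁))` reveals nothing about the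
partial secret `s₂`: for every pair of share values `(w₁, w₄)` the number of
inputs `(s₁, s₂, r₁, r₂, r₃, r₄)` producing them with `s₂ = a` is independent of
`a` (the counting equivalent of `H(S₂ | V₁V₄) = H(S₂)`). -/
theorem okada_kurosawa_V1V4_hides_s2 (F : Type*) [Field F] [Fintype F]
    (w₁ w₄ : F × F) (a a' : F) :
    Nat.card {t : F × F × F × F × F × F //
        ((t.2.2.1, t.2.2.2.2.1) : F × F) = w₁ ∧
        ((t.2.2.1 + t.1, t.2.2.2.1 + t.1) : F × F) = w₄ ∧ t.2.1 = a} =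
    Nat.card {t : F × F × F × F × F × F //
        ((t.2.2.1, t.2.2.2.2.1) : F × F) = w₁ ∧
        ((t.2.2.1 + t.1, t.2.2.2.1 + t.1) : F × F) = w₄ ∧ t.2.1 = a'} := by
  apply Nat.card_congr
  exact {
    toFun := fun ⟨t, h⟩ => ⟨(t.1, a', t.2.2), h.1, h.2.1, rfl⟩
    invFun := fun ⟨t, h⟩ => ⟨(t.1, a, t.2.2), h.1, h.2.1, rfl⟩
    left_inv := fun ⟨t, h⟩ => by
      simp only [Subtype.mk.injEq]
      obtain ⟨s₁, s₂, r⟩ := t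
      simp_all [h.2.2]
    right_inv := fun ⟨t, h⟩ => by
      simp only [Subtype.mk.injEq]
      obtain ⟨s₁, s₂, r⟩ := t
      simp_all [h.2.2] }
end

section
/- In the Okada–Kurosawa ramp scheme over a finite field F, the share pair (V₃, V₄) is a forbidden set: for every (s₁, s₂) ∈ F² and every pair of target values (w₃, w₄) ∈ (F × F)², there exists exactly one quadruple (r₁, r₂, r₃, r₄) ∈ F⁴ with V₃ = w₃ and V₄ = w₄. (This is the counting equivalent of H(S | V₃V₄) = H(S): the pair (V₃, V₄) leaks no information about the secret.) -/
/-- In the Okada–Kurosawa ramp scheme over a finite field `F`,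
the share pair `(V₃, V₄) = ((r₁+r₄+s₁, r₂+r₃+s₂), (r₁+s₁, r₂+s₁))` is a forbidden
set: for every secret `(s₁, s₂)` and every pair of target values `(w₃, w₄)` there
is exactly one quadruple `(r₁, r₂, r₃, r₄)` with `V₃ = w₃` and `V₄ = w₄` (the
counting equivalent of `H(S | V₃V₄) = H(S)`). -/
theorem okada_kurosawa_V3V4_forbidden (F : Type*) [Field F] [Fintype F]
    (s₁ s₂ : F) (w₃ w₄ : F × F) :
    ∃! r : F × F × F × F,
      ((r.1 + r.2.2.2 + s₁, r.2.1 + r.2.2.1 + s₂) : F × F) = w₃ ∧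
      ((r.1 + s₁, r.2.1 + s₁) : F × F) = w₄ := by
  refine ⟨(w₄.1 - s₁, w₄.2 - s₁, w₃.2 - (w₄.2 - s₁) - s₂, w₃.1 - (w₄.1 - s₁) - s₁), ?_, ?_⟩
  · simp only [Prod.mk.injEq]; and_intros <;> ring
  · rintro ⟨r₁, r₂, r₃, r₄⟩ ⟨h₃, h₄⟩
    simp only [Prod.ext_iff] at h₃ h₄ ⊢
    obtain ⟨a, b⟩ := h₃; obtain ⟨c, d⟩ := h₄
    refine ⟨by linear_combination c, by linear_combination d, by linear_combination b - d, by linear_combination a - c⟩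
end

section
/- In the transformed Okada–Kurosawa scheme over a finite field F of characteristic different from 2, the secret pair (s₁', s₂') is determined by the shares (V₁, V₂, V₃): if two inputs (s₁', s₂', r₁, r₂, r₃, r₄) and (s₁'', s₂'', r₁', r₂', r₃', r₄') yield the same values of V₁, V₂ and V₃, then s₁' = s₁'' and s₂' = s₂''. -/
/-- In the transformed Okada–Kurosawa scheme (substitution
`s₁ = s₁' + s₂'`, `s₂ = s₁' − s₂'`) over a finite field `F` of characteristic
different from `2`, with shares `V₁ = (r₁, r₃)`, `V₂ = (r₂, r₄)`,
`V₃ = (r₁+r₄+s₁'+s₂', r₂+r₃+s₁'−s₂')`, the secret pair `(s₁', s₂')` is determined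
by `(V₁, V₂, V₃)`. -/
theorem transformed_okada_kurosawa_decryption (F : Type*) [Field F] [Fintype F]
    (hchar : ringChar F ≠ 2) :
    ∀ s₁' s₂' r₁ r₂ r₃ r₄ s₁'' s₂'' r₁' r₂' r₃' r₄' : F,
      ((r₁, r₃) : F × F) = (r₁', r₃') →
      ((r₂, r₄) : F × F) = (r₂', r₄') →
      ((r₁ + r₄ + s₁' + s₂', r₂ + r₃ + s₁' - s₂') : F × F) =
        (r₁' + r₄' + s₁'' + s₂'', r₂' + r₃' + s₁'' - s₂'') →
      s₁' = s₁'' ∧ s₂' = s₂'' := by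
  intro s₁' s₂' r₁ r₂ r₃ r₄ s₁'' s₂'' r₁' r₂' r₃' r₄' h1 h2 h3
  obtain ⟨e1, e2⟩ := Prod.mk.injEq .. ▸ h1
  obtain ⟨e3, e4⟩ := Prod.mk.injEq .. ▸ h2
  obtain ⟨e5, e6⟩ := Prod.mk.injEq .. ▸ h3
  have h2ne : (2 : F) ≠ 0 := Ring.two_ne_zero hchar
  constructor
  · have : 2 * s₁' = 2 * s₁'' := by linear_combination e5 + e6 - e1 - e2 - e3 - e4
    exact mul_left_cancel₀ h2ne this
  · have : 2 * s₂' = 2 * s₂'' := by linear_combination e5 - e6 - e1 + e2 + e3 - e4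
    exact mul_left_cancel₀ h2ne this
end

section
/- In the transformed Okada–Kurosawa scheme over a finite field F, the share pair (V₁, V₄) reveals nothing about either individual secret coordinate: for every pair of values (w₁, w₄) ∈ (F × F)² and every a, a' ∈ F, #{(s₁', s₂', r₁, r₂, r₃, r₄) ∈ F⁶ : V₁ = w₁, V₄ = w₄, s₁' = a} = #{(s₁', s₂', r₁, r₂, r₃, r₄) ∈ F⁶ : V₁ = w₁, V₄ = w₄, s₁' = a'}, and the same identity holds with s₂' in place of s₁'. (These are the counting equivalents of H(S₁' | V₁V₄) = H(S₁') and H(S₂' | V₁V₄) = H(S₂'), the strong ramp property at the set {V₁, V₄}.) -/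
private lemma okk_count1 (F : Type*) [Field F] (w₁ w₄ : F × F) (a : F) :
    Nat.card {t : F × F × F × F × F × F //
        ((t.2.2.1, t.2.2.2.2.1) : F × F) = w₁ ∧
        ((t.2.2.1 + t.1 + t.2.1, t.2.2.2.1 + t.1 + t.2.1) : F × F) = w₄ ∧
        t.1 = a} = Nat.card F := by
  refine Nat.card_congr ⟨fun t => t.1.2.2.2.2.2,
    fun r => ⟨(a, w₄.1 - w₁.1 - a, w₁.1, w₄.2 - (w₄.1 - w₁.1 - a) - a, w₁.2, r),
      rfl, Prod.ext_iff.mpr ⟨by ring, by ring⟩, rfl⟩, ?_, fun r => rfl⟩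
  rintro ⟨⟨s₁, s₂, r₁, r₂, r₃, r₄⟩, h₁, h₂, h₃⟩
  simp only [Prod.ext_iff] at h₁ h₂
  obtain ⟨e1, e2⟩ := h₁; obtain ⟨e3, e4⟩ := h₂
  subst h₃ e1 e2
  refine Subtype.ext (Prod.ext rfl (Prod.ext ?_ (Prod.ext rfl (Prod.ext ?_ (Prod.ext rfl rfl))))) <;>
    simp only at e3 e4 ⊢
  · linear_combination -e3
  · linear_combination e3 - e4

private lemma okk_count2 (F : Type*) [Field F] (w₁ w₄ : F × F) (a : F) :
    Nat.card {t : F × F × F × F × F × F //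
        ((t.2.2.1, t.2.2.2.2.1) : F × F) = w₁ ∧
        ((t.2.2.1 + t.1 + t.2.1, t.2.2.2.1 + t.1 + t.2.1) : F × F) = w₄ ∧
        t.2.1 = a} = Nat.card F := by
  refine Nat.card_congr ⟨fun t => t.1.2.2.2.2.2,
    fun r => ⟨(w₄.1 - w₁.1 - a, a, w₁.1, w₄.2 - (w₄.1 - w₁.1 - a) - a, w₁.2, r),
      rfl, Prod.ext_iff.mpr ⟨by ring, by ring⟩, rfl⟩, ?_, fun r => rfl⟩
  rintro ⟨⟨s₁, s₂, r₁, r₂, r₃, r₄⟩, h₁, h₂, h₃⟩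
  simp only [Prod.ext_iff] at h₁ h₂
  obtain ⟨e1, e2⟩ := h₁; obtain ⟨e3, e4⟩ := h₂
  subst h₃ e1 e2
  refine Subtype.ext (Prod.ext ?_ (Prod.ext rfl (Prod.ext rfl (Prod.ext ?_ (Prod.ext rfl rfl))))) <;>
    simp only at e3 e4 ⊢
  · linear_combination -e3
  · linear_combination e3 - e4

/-- In the transformed Okada–Kurosawa scheme over a finite
field `F`, with `V₁ = (r₁, r₃)` and `V₄ = (r₁+s₁'+s₂', r₂+s₁'+s₂')`, the share
pair `(V₁, V₄)` reveals nothing about either individual secret coordinate: the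
number of inputs `(s₁', s₂', r₁, r₂, r₃, r₄)` producing given share values with
`s₁' = a` (resp. `s₂' = a`) is independent of `a` (the counting equivalents of
`H(S₁' | V₁V₄) = H(S₁')` and `H(S₂' | V₁V₄) = H(S₂')`). -/
theorem transformed_okada_kurosawa_V1V4_strong (F : Type*) [Field F] [Fintype F]
    (w₁ w₄ : F × F) (a a' : F) :
    (Nat.card {t : F × F × F × F × F × F //
        ((t.2.2.1, t.2.2.2.2.1) : F × F) = w₁ ∧
        ((t.2.2.1 + t.1 + t.2.1, t.2.2.2.1 + t.1 + t.2.1) : F × F) = w₄ ∧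
        t.1 = a} =
      Nat.card {t : F × F × F × F × F × F //
        ((t.2.2.1, t.2.2.2.2.1) : F × F) = w₁ ∧
        ((t.2.2.1 + t.1 + t.2.1, t.2.2.2.1 + t.1 + t.2.1) : F × F) = w₄ ∧
        t.1 = a'}) ∧
    (Nat.card {t : F × F × F × F × F × F //
        ((t.2.2.1, t.2.2.2.2.1) : F × F) = w₁ ∧
        ((t.2.2.1 + t.1 + t.2.1, t.2.2.2.1 + t.1 + t.2.1) : F × F) = w₄ ∧
        t.2.1 = a} =
      Nat.card {t : F × F × F × F × F × F //
        ((t.2.2.1, t.2.2.2.2.1) : F × F) = w₁ ∧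
        ((t.2.2.1 + t.1 + t.2.1, t.2.2.2.1 + t.1 + t.2.1) : F × F) = w₄ ∧
        t.2.1 = a'}) := by
  exact ⟨by rw [okk_count1, okk_count1], by rw [okk_count2, okk_count2]⟩
end

section
/- In Yamamoto's (3,2,3)-threshold ramp scheme over a finite field F, the share pair (V₂, V₃) determines the sum s₁ + s₂ (namely s₁ + s₂ = V₂ − V₃) but reveals nothing about either individual secret: for every (w₂, w₃) ∈ F² and every a ∈ F, #{(s₁, s₂, ρ) ∈ F³ : V₂ = w₂, V₃ = w₃, s₁ = a} = 1, and likewise #{(s₁, s₂, ρ) ∈ F³ : V₂ = w₂, V₃ = w₃, s₂ = a} = 1. (Hence these counts are independent of a, the counting equivalents of H(S₁ | V₂V₃) = H(S₁) and H(S₂ | V₂V₃) = H(S₂); since neither secret coordinate is determined while half the secret leaks, the scheme is weak but not partially decryptable.) -/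
lemma card_one_of_unique {α : Type*} [Nonempty α] [Subsingleton α] : Nat.card α = 1 :=
  Nat.card_unique

/-- In Yamamoto's `(3,2,3)`-threshold ramp scheme over a finite
field `F`, with shares `V₁ = s₁ + ρ`, `V₂ = s₁ + s₂ + ρ`, `V₃ = ρ`, the pair
`(V₂, V₃)` determines the sum `s₁ + s₂ = V₂ - V₃` but reveals nothing about
either individual secret: for every `(w₂, w₃)` and every `a`, there is exactly
one input `(s₁, s₂, ρ)` with `V₂ = w₂`, `V₃ = w₃` and `s₁ = a`, and exactly one
with `s₂ = a` (the counting equivalents of `H(S₁ | V₂V₃) = H(S₁)` and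
`H(S₂ | V₂V₃) = H(S₂)`); so the scheme is weak but not partially decryptable. -/
theorem yamamoto_V2V3_weak_not_pd (F : Type*) [Field F] [Fintype F] :
    (∀ s₁ s₂ ρ : F, s₁ + s₂ = (s₁ + s₂ + ρ) - ρ) ∧
    ∀ w₂ w₃ a : F,
      Nat.card {t : F × F × F //
          t.1 + t.2.1 + t.2.2 = w₂ ∧ t.2.2 = w₃ ∧ t.1 = a} = 1 ∧
      Nat.card {t : F × F × F //
          t.1 + t.2.1 + t.2.2 = w₂ ∧ t.2.2 = w₃ ∧ t.2.1 = a} = 1 := by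
  refine ⟨fun s₁ s₂ ρ => by ring, fun w₂ w₃ a => ⟨?_, ?_⟩⟩
  · have hne : Nonempty {t : F × F × F //
          t.1 + t.2.1 + t.2.2 = w₂ ∧ t.2.2 = w₃ ∧ t.1 = a} :=
      ⟨⟨(a, w₂ - a - w₃, w₃), by ring, rfl, rfl⟩⟩
    have hs : Subsingleton {t : F × F × F //
          t.1 + t.2.1 + t.2.2 = w₂ ∧ t.2.2 = w₃ ∧ t.1 = a} := by
      constructor
      rintro ⟨⟨x, y, z⟩, h1, h2, h3⟩ ⟨⟨x', y', z'⟩, h1', h2', h3'⟩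
      simp only at h1 h2 h3 h1' h2' h3'
      subst h2 h3 h2' h3'
      have hy : y = y' := by linear_combination h1 - h1'
      subst hy; rfl
    exact Nat.card_unique
  · have hne : Nonempty {t : F × F × F //
          t.1 + t.2.1 + t.2.2 = w₂ ∧ t.2.2 = w₃ ∧ t.2.1 = a} :=
      ⟨⟨(w₂ - a - w₃, a, w₃), by ring, rfl, rfl⟩⟩
    have hs : Subsingleton {t : F × F × F //
          t.1 + t.2.1 + t.2.2 = w₂ ∧ t.2.2 = w₃ ∧ t.2.1 = a} := by
      constructor
      rintro ⟨⟨x, y, z⟩, h1, h2, h3⟩ ⟨⟨x', y', z'⟩, h1', h2', h3'⟩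
      simp only at h1 h2 h3 h1' h2' h3'
      subst h2 h3 h2' h3'
      have hx : x = x' := by linear_combination h1 - h1'
      subst hx; rfl
    exact Nat.card_unique
end

section
/- Apply to Yamamoto's (3,2,3)-threshold ramp scheme the substitution s₁ = s₁' + s₂', s₂ = s₁' − s₂' (the public matrix T = [[1, 1], [1, −1]]), giving shares V₁ = s₁' + s₂' + ρ, V₂ = 2·s₁' + ρ, V₃ = ρ. Then V₂ − V₃ = 2·s₁' for all s₁', s₂', ρ ∈ F; in particular, if F has characteristic different from 2, the partial secret s₁' is completely determined by the non-qualified share pair (V₂, V₃), so the transformed scheme is not a strong ramp secret sharing scheme (showing that a weak but not partially decryptable ramp scheme need not be transformed into a strong one by a matrix T satisfying the submatrix rank condition). -/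
/-- Applying the substitution `s₁ = s₁' + s₂'`, `s₂ = s₁' − s₂'`
(matrix `T = [[1,1],[1,−1]]`) to Yamamoto's `(3,2,3)`-threshold ramp scheme gives
shares `V₁ = s₁' + s₂' + ρ`, `V₂ = 2·s₁' + ρ`, `V₃ = ρ`.  Then `V₂ − V₃ = 2·s₁'`
always; in particular, if `F` has characteristic different from `2`, the partial
secret `s₁'` is completely determined by the non-qualified share pair `(V₂, V₃)`,
so the transformed scheme is not a strong ramp secret sharing scheme. -/
theorem transformed_yamamoto_not_strong (F : Type*) [Field F] [Fintype F] :
    (∀ s₁' s₂' ρ : F, (2 * s₁' + ρ) - ρ = 2 * s₁') ∧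
    (ringChar F ≠ 2 → ∀ s₁' s₂' ρ s₁'' s₂'' ρ' : F,
      2 * s₁' + ρ = 2 * s₁'' + ρ' → ρ = ρ' → s₁' = s₁'') := by
  refine ⟨fun _ _ _ => by ring, fun h s₁' _ ρ s₁'' _ ρ' heq hρ => ?_⟩
  have h2 : (2 : F) ≠ 0 := by
    simpa using Ring.two_ne_zero (by simpa using h)
  subst hρ
  have : 2 * s₁' = 2 * s₁'' := by linear_combination heq
  exact mul_left_cancel₀ h2 this
end
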